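/- arXiv:1702.01698 — 11 statements merged into one kernel-verified Lean document; each statement's English description precedes it below -/
import Mathlib

section
/- Let n ≥ 1 and let x_1, …, x_{n+1} be pairwise distinct complex numbers. Then the sum over all i ∈ {1,…,n+1} of (∑_{j≠i}(x_j − x_i))^n / ∏_{j≠i}(x_j − x_i) equals (n+1)^n. -/
open Polynomial Finset

lemma coeff_basis_top {n : ℕ} (x : Fin (n + 1) → ℂ) (hx : Function.Injective x)
    (i : Fin (n + 1)) :
    (Lagrange.basis Finset.univ x i).coeff n = ∏ j ∈ Finset.univ.erase i, (x i - x j)⁻¹ := by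
  have hinj : Set.InjOn x (Finset.univ : Finset (Fin (n+1))) := hx.injOn
  have hdeg : (Lagrange.basis Finset.univ x i).natDegree = n := by
    rw [Lagrange.natDegree_basis hinj (mem_univ i), card_univ, Fintype.card_fin,
      Nat.add_sub_cancel]
  have h1 : (Lagrange.basis Finset.univ x i).leadingCoeff
      = ∏ j ∈ Finset.univ.erase i, (x i - x j)⁻¹ := by
    rw [Lagrange.basis, leadingCoeff_prod]
    refine prod_congr rfl fun j hj => ?_
    rw [Lagrange.basisDivisor, leadingCoeff_mul, leadingCoeff_C,
      (monic_X_sub_C (x j)).leadingCoeff, mul_one]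
  rw [← h1, leadingCoeff, hdeg]

theorem stmt_3 (n : ℕ) (hn : 1 ≤ n) (x : Fin (n + 1) → ℂ) (hx : Function.Injective x) :
    ∑ i : Fin (n + 1),
      (∑ j ∈ Finset.univ.erase i, (x j - x i)) ^ n /
        ∏ j ∈ Finset.univ.erase i, (x j - x i) = ((n : ℂ) + 1) ^ n := by
  classical
  set S : ℂ := ∑ j, x j with hS
  have ha : (-((n : ℂ) + 1)) ≠ 0 := by
    intro h
    have : ((n : ℂ) + 1) = 0 := by linear_combination -h
    exact Nat.cast_add_one_ne_zero n this
  set P : ℂ[X] := (C (-((n : ℂ) + 1)) * X + C S) ^ n with hP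
  have hinj : Set.InjOn x (Finset.univ : Finset (Fin (n+1))) := hx.injOn
  have hdeg1 : (C (-((n : ℂ) + 1)) * X + C S).degree = 1 := degree_linear ha
  have hdegP : P.degree < (Finset.univ : Finset (Fin (n+1))).card := by
    rw [hP, degree_pow, hdeg1, card_univ, Fintype.card_fin]
    rw [nsmul_eq_mul, mul_one]
    exact_mod_cast Nat.lt_succ_self n
  have hIP := Lagrange.eq_interpolate hinj hdegP
  have hcoeffP : P.coeff n = (-((n : ℂ) + 1)) ^ n := by
    have hndegP : P.natDegree = n := by
      rw [hP, natDegree_pow, natDegree_linear ha, mul_one]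
    have hlc : P.leadingCoeff = (-((n : ℂ) + 1)) ^ n := by
      rw [hP, leadingCoeff_pow, leadingCoeff_linear ha]
    rw [← hlc, leadingCoeff, hndegP]
  have key : (-((n : ℂ) + 1)) ^ n
      = ∑ i : Fin (n + 1), P.eval (x i) * ∏ j ∈ Finset.univ.erase i, (x i - x j)⁻¹ := by
    calc (-((n : ℂ) + 1)) ^ n = P.coeff n := hcoeffP.symm
      _ = (Lagrange.interpolate Finset.univ x fun i => P.eval (x i)).coeff n := by rw [← hIP]
      _ = _ := by
          rw [Lagrange.interpolate_apply, finset_sum_coeff]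
          refine sum_congr rfl fun i _ => ?_
          rw [coeff_C_mul, coeff_basis_top x hx]
  have hterm : ∀ i : Fin (n + 1),
      (∑ j ∈ Finset.univ.erase i, (x j - x i)) ^ n /
        ∏ j ∈ Finset.univ.erase i, (x j - x i)
      = (-1 : ℂ) ^ n * (P.eval (x i) * ∏ j ∈ Finset.univ.erase i, (x i - x j)⁻¹) := by
    intro i
    have hcard : (Finset.univ.erase i).card = n := by
      rw [card_erase_of_mem (mem_univ i), card_univ, Fintype.card_fin, Nat.add_sub_cancel]
    have hsum : ∑ j ∈ Finset.univ.erase i, (x j - x i) = S - ((n : ℂ) + 1) * x i := by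
      rw [sum_sub_distrib, sum_const, hcard, hS, ← sum_erase_add _ _ (mem_univ i)]
      push_cast
      ring
    have heval : P.eval (x i) = (S - ((n : ℂ) + 1) * x i) ^ n := by
      rw [hP]; simp; ring_nf
    have hprod : ∏ j ∈ Finset.univ.erase i, (x j - x i)
        = (-1 : ℂ) ^ n * ∏ j ∈ Finset.univ.erase i, (x i - x j) := by
      rw [show ((-1 : ℂ)) ^ n = ∏ _j ∈ Finset.univ.erase i, (-1 : ℂ) by
        rw [prod_const, hcard], ← prod_mul_distrib]
      exact prod_congr rfl fun j _ => by ring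
    rw [hsum, heval, hprod, prod_inv_distrib, div_eq_mul_inv, mul_inv,
      show (((-1:ℂ)) ^ n)⁻¹ = (-1:ℂ) ^ n by rw [← inv_pow, inv_neg, inv_one]]
    ring
  rw [Finset.sum_congr rfl fun i _ => hterm i, ← mul_sum, ← key]
  rw [show (-((n : ℂ) + 1)) ^ n = (-1 : ℂ) ^ n * ((n : ℂ) + 1) ^ n by rw [← mul_pow]; ring_nf,
    ← mul_assoc, ← mul_pow]
  simp
end

section
/- Let n ≥ 1 and let x_1, …, x_{n+1} be pairwise distinct complex numbers. Then the sum over all i ∈ {1,…,n+1} of (∑_{j≠i}(x_j − x_i))^{n+1} / ∏_{j≠i}(x_j − x_i) equals 0. -/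
open Polynomial Finset

lemma aux_key (n : ℕ) (x : Fin (n + 1) → ℂ) (hx : Function.Injective x) :
    ∑ i : Fin (n + 1),
      ((∑ j, x j) - (n + 1) * x i) ^ (n + 1) *
        (∏ j ∈ Finset.univ.erase i, (x i - x j))⁻¹ = 0 := by
  classical
  set S : ℂ := ∑ j, x j with hS
  have hn1 : (n + 1 : ℂ) ≠ 0 := by
    exact_mod_cast (Nat.cast_ne_zero (R := ℂ)).mpr (Nat.succ_ne_zero n)
  set c : ℂ := -S / (n + 1) with hc
  set L : ℂ := (-(n + 1 : ℂ)) ^ (n + 1) with hL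
  set P : ℂ[X] := C L * (X + C c) ^ (n + 1) with hP
  have hPeval : ∀ t : ℂ, P.eval t = (S - (n + 1) * t) ^ (n + 1) := by
    intro t
    have h1 : -(n + 1 : ℂ) * (t + c) = S - (n + 1) * t := by
      have hc' : (n + 1 : ℂ) * c = -S := by rw [hc, mul_div_assoc', mul_div_cancel_left₀ _ hn1]
      linear_combination -hc'
    rw [hP]
    simp only [eval_mul, eval_C, eval_pow, eval_add, eval_X]
    rw [hL, ← mul_pow, h1]
  set N : ℂ[X] := Lagrange.nodal Finset.univ x with hN
  set R : ℂ[X] := P - C L * N with hR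
  have hdegR : R.degree < (Finset.univ : Finset (Fin (n + 1))).card := by
    have h1 : ((X + C c) ^ (n + 1) : ℂ[X]).Monic := (monic_X_add_C c).pow _
    have h2 : (N : ℂ[X]).Monic := Lagrange.nodal_monic
    have hdeg1 : ((X + C c) ^ (n + 1) : ℂ[X]).degree = (n + 1 : ℕ) := by
      simpa using h1.degree_pow.trans (by simp [(monic_X_add_C c).degree_eq])
    have hdeg2 : (N : ℂ[X]).degree = (n + 1 : ℕ) := by
      rw [hN, Lagrange.degree_nodal]; simp
    have hsub : ((X + C c) ^ (n + 1) - N).degree < ((n + 1 : ℕ) : WithBot ℕ) := by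
      have := degree_sub_lt (hdeg1.trans hdeg2.symm) h1.ne_zero
        (by rw [h1.leadingCoeff, h2.leadingCoeff])
      rwa [hdeg1] at this
    have hRe : R = C L * ((X + C c) ^ (n + 1) - N) := by rw [hR, hP]; ring
    have h3 : (C L * ((X + C c) ^ (n + 1) - N)).degree
        ≤ ((X + C c) ^ (n + 1) - N).degree := by
      calc (C L * ((X + C c) ^ (n + 1) - N)).degree
          ≤ (C L).degree + ((X + C c) ^ (n + 1) - N).degree := degree_mul_le _ _
        _ ≤ 0 + ((X + C c) ^ (n + 1) - N).degree := by gcongr; exact degree_C_le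
        _ = ((X + C c) ^ (n + 1) - N).degree := zero_add _
    rw [hRe, Finset.card_univ, Fintype.card_fin]
    exact h3.trans_lt hsub
  have hinterp : R = Lagrange.interpolate Finset.univ x (fun i => R.eval (x i)) :=
    Lagrange.eq_interpolate hx.injOn hdegR
  -- coefficient of degree n on the left
  have hcoeffN : N.coeff n = -S := by
    have := Polynomial.prod_X_sub_C_coeff_card_pred (Finset.univ : Finset (Fin (n + 1))) x
      (by simp)
    simpa [hN, Lagrange.nodal, Finset.card_univ] using this
  have hcoeffP : P.coeff n = L * (-S) := by
    rw [hP, coeff_C_mul, coeff_X_add_C_pow]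
    have : c ^ (n + 1 - n) * ((n + 1).choose n : ℂ) = -S := by
      rw [Nat.succ_sub (le_refl n), Nat.sub_self, pow_one, Nat.choose_succ_self_right]
      push_cast; rw [mul_comm, hc, mul_div_assoc', mul_div_cancel_left₀ _ hn1]
    rw [this]
  have hcoeffR : R.coeff n = 0 := by
    rw [hR]
    simp [coeff_C_mul, hcoeffP, hcoeffN]
  -- coefficient of degree n on the right
  have hbasis : ∀ i : Fin (n + 1),
      (Lagrange.basis Finset.univ x i).coeff n = (∏ j ∈ Finset.univ.erase i, (x i - x j))⁻¹ := by
    intro i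
    have hnd : (Lagrange.basis Finset.univ x i).natDegree = n := by
      rw [Lagrange.natDegree_basis hx.injOn (mem_univ i), Finset.card_univ]
      simp
    have hlc : (Lagrange.basis Finset.univ x i).leadingCoeff
        = ∏ j ∈ Finset.univ.erase i, (x i - x j)⁻¹ := by
      rw [Lagrange.basis, leadingCoeff_prod]
      refine Finset.prod_congr rfl fun j hj => ?_
      have hne : x i ≠ x j := fun h => (Finset.mem_erase.mp hj).1 (hx h).symm
      rw [Lagrange.basisDivisor, leadingCoeff_mul, leadingCoeff_C,
        leadingCoeff_X_sub_C, mul_one]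
    have hcl : (Lagrange.basis Finset.univ x i).coeff n
        = (Lagrange.basis Finset.univ x i).leadingCoeff := by
      rw [leadingCoeff, hnd]
    rw [hcl, hlc, Finset.prod_inv_distrib]
  have heval : ∀ i : Fin (n + 1), R.eval (x i) = (S - (n + 1) * x i) ^ (n + 1) := by
    intro i
    rw [hR]
    simp [hPeval, hN, Lagrange.eval_nodal_at_node (Finset.mem_univ i)]
  have h0 : (0 : ℂ) = ∑ i : Fin (n + 1),
      (S - (n + 1) * x i) ^ (n + 1) * (∏ j ∈ Finset.univ.erase i, (x i - x j))⁻¹ := by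
    calc (0 : ℂ) = R.coeff n := hcoeffR.symm
      _ = (Lagrange.interpolate Finset.univ x (fun i => R.eval (x i))).coeff n := by
          rw [← hinterp]
      _ = ∑ i : Fin (n + 1), R.eval (x i) * (Lagrange.basis Finset.univ x i).coeff n := by
          rw [Lagrange.interpolate_apply, finset_sum_coeff]
          exact Finset.sum_congr rfl fun i _ => by rw [coeff_C_mul]
      _ = _ := Finset.sum_congr rfl fun i _ => by rw [heval i, hbasis i]
  exact h0.symm

theorem stmt_4 (n : ℕ) (hn : 1 ≤ n) (x : Fin (n + 1) → ℂ) (hx : Function.Injective x) :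
    ∑ i : Fin (n + 1),
      (∑ j ∈ Finset.univ.erase i, (x j - x i)) ^ (n + 1) /
        ∏ j ∈ Finset.univ.erase i, (x j - x i) = 0 := by
  classical
  have key := aux_key n x hx
  have hcard : ∀ i : Fin (n + 1), (Finset.univ.erase i).card = n := by
    intro i; rw [Finset.card_erase_of_mem (Finset.mem_univ i)]; simp
  have hs : ∀ i : Fin (n + 1),
      ∑ j ∈ Finset.univ.erase i, (x j - x i) = (∑ j, x j) - (n + 1) * x i := by
    intro i
    rw [Finset.sum_sub_distrib, Finset.sum_const, hcard i,
      Finset.sum_erase_eq_sub (Finset.mem_univ i)]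
    push_cast; ring
  have hp : ∀ i : Fin (n + 1),
      ∏ j ∈ Finset.univ.erase i, (x j - x i)
        = (-1) ^ n * ∏ j ∈ Finset.univ.erase i, (x i - x j) := by
    intro i
    have h1 : ∏ j ∈ Finset.univ.erase i, (x j - x i)
        = ∏ j ∈ Finset.univ.erase i, (-1) * (x i - x j) :=
      Finset.prod_congr rfl fun j _ => by ring
    rw [h1, Finset.prod_mul_distrib, Finset.prod_const, hcard i]
  calc ∑ i : Fin (n + 1),
      (∑ j ∈ Finset.univ.erase i, (x j - x i)) ^ (n + 1) /
        ∏ j ∈ Finset.univ.erase i, (x j - x i)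
      = (-1) ^ n * ∑ i : Fin (n + 1),
          ((∑ j, x j) - (n + 1) * x i) ^ (n + 1) *
            (∏ j ∈ Finset.univ.erase i, (x i - x j))⁻¹ := by
        rw [Finset.mul_sum]
        refine Finset.sum_congr rfl fun i _ => ?_
        rw [hs i, hp i, div_eq_mul_inv, mul_inv, ← inv_pow, inv_neg, inv_one]
        ring
    _ = 0 := by rw [key, mul_zero]
end

section
/- Let N ≥ 2 and let x_1, …, x_N be pairwise distinct complex numbers. Then the sum over all permutations σ ∈ S_N of 1/∏_{1≤i<j≤N}(x_{σ(j)} − x_{σ(i)}) equals 0. -/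
open Finset Equiv Matrix

lemma prod_pairs_eq (N : ℕ) (f : Fin N → Fin N → ℂ) :
    ∏ p ∈ Finset.univ.filter (fun p : Fin N × Fin N => p.1 < p.2), f p.1 p.2
      = ∏ i, ∏ j ∈ Finset.Ioi i, f i j := by
  rw [Finset.prod_sigma']
  apply Finset.prod_nbij' (fun p => (⟨p.1, p.2⟩ : (_ : Fin N) × Fin N))
    (fun p => (p.1, p.2)) <;> simp [Finset.mem_filter]

lemma vdm_perm (N : ℕ) (x : Fin N → ℂ) (σ : Equiv.Perm (Fin N)) :
    ∏ p ∈ Finset.univ.filter (fun p : Fin N × Fin N => p.1 < p.2),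
        (x (σ p.2) - x (σ p.1))
      = (Equiv.Perm.sign σ : ℤ) *
        ∏ p ∈ Finset.univ.filter (fun p : Fin N × Fin N => p.1 < p.2),
          (x p.2 - x p.1) := by
  have hv := Matrix.det_vandermonde (x ∘ σ)
  simp only [Function.comp_apply] at hv
  rw [prod_pairs_eq N (fun i j => x (σ j) - x (σ i)),
      prod_pairs_eq N (fun i j => x j - x i),
      ← hv, ← Matrix.det_vandermonde x]
  have h : Matrix.vandermonde (x ∘ σ) = (Matrix.vandermonde x).submatrix σ id := by
    ext i j; simp [Matrix.vandermonde]
  rw [h, Matrix.det_permute]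

theorem stmt_7 (N : ℕ) (hN : 2 ≤ N) (x : Fin N → ℂ) (hx : Function.Injective x) :
    ∑ σ : Equiv.Perm (Fin N),
      (1 : ℂ) / ∏ p ∈ Finset.univ.filter (fun p : Fin N × Fin N => p.1 < p.2),
        (x (σ p.2) - x (σ p.1)) = 0 := by
  set V : ℂ := ∏ p ∈ Finset.univ.filter (fun p : Fin N × Fin N => p.1 < p.2),
      (x p.2 - x p.1) with hV
  have h1 : ∀ σ : Equiv.Perm (Fin N),
      (1 : ℂ) / ∏ p ∈ Finset.univ.filter (fun p : Fin N × Fin N => p.1 < p.2),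
        (x (σ p.2) - x (σ p.1)) = ((Equiv.Perm.sign σ : ℤ) : ℂ) * (1 / V) := by
    intro σ
    rw [vdm_perm N x σ, ← hV, one_div, one_div, mul_inv]
    congr 1
    rcases Int.units_eq_one_or (Equiv.Perm.sign σ) with h | h <;> norm_num [h]
  simp only [h1, ← Finset.sum_mul]
  have h2 : ∑ σ : Equiv.Perm (Fin N), ((Equiv.Perm.sign σ : ℤ) : ℂ) = 0 := by
    have h0 : (⟨0, by omega⟩ : Fin N) ≠ (⟨1, by omega⟩ : Fin N) := by
      simp [Fin.ext_iff]
    set τ : Equiv.Perm (Fin N) := Equiv.swap ⟨0, by omega⟩ ⟨1, by omega⟩ with hτ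
    have hsτ : Equiv.Perm.sign τ = -1 := Equiv.Perm.sign_swap h0
    have key : (∑ σ : Equiv.Perm (Fin N), ((Equiv.Perm.sign σ : ℤ) : ℂ))
        = -(∑ σ : Equiv.Perm (Fin N), ((Equiv.Perm.sign σ : ℤ) : ℂ)) := by
      conv_lhs => rw [← Equiv.sum_comp (Equiv.mulRight τ)
        (fun σ : Equiv.Perm (Fin N) => ((Equiv.Perm.sign σ : ℤ) : ℂ))]
      rw [← Finset.sum_neg_distrib]
      refine Finset.sum_congr rfl fun σ _ => ?_
      simp [Equiv.Perm.sign_mul, hsτ]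
    linear_combination key / 2
  rw [h2, zero_mul]
end

section
/- Let N ≥ 2, let x_1, …, x_N be pairwise distinct complex numbers, and let k be an integer with 0 ≤ k < N(N−1)/2. Then the sum over all permutations σ ∈ S_N of (∑_{1≤i<j≤N}(x_{σ(j)} − x_{σ(i)}))^k / ∏_{1≤i<j≤N}(x_{σ(j)} − x_{σ(i)}) equals 0. -/
open Finset

/-- A strictly monotone function `Fin n → ℕ` satisfies `i ≤ f i`. -/
private lemma aux_strictMono_le {n : ℕ} {f : Fin n → ℕ} (hf : StrictMono f) :
    ∀ i : Fin n, (i : ℕ) ≤ f i := by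
  suffices h : ∀ m : ℕ, ∀ i : Fin n, (i : ℕ) = m → m ≤ f i by
    intro i; exact h _ i rfl
  intro m
  induction m with
  | zero => intro i _; exact Nat.zero_le _
  | succ m ih =>
    intro i hi
    have hm : m < n := by omega
    have hlt : (⟨m, hm⟩ : Fin n) < i := by
      simp only [Fin.lt_def]; omega
    have := hf hlt
    have := ih ⟨m, hm⟩ rfl
    omega

/-- An injective function `Fin n → ℕ` has sum at least `0 + 1 + ⋯ + (n-1)`. -/
private lemma aux_inj_sum_le {n : ℕ} {f : Fin n → ℕ} (hf : Function.Injective f) :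
    ∑ i ∈ range n, i ≤ ∑ i, f i := by
  classical
  set s : Finset ℕ := Finset.image f univ with hs
  have hcard : s.card = n := by
    rw [hs, card_image_of_injective _ hf, card_univ, Fintype.card_fin]
  set e := s.orderIsoOfFin hcard with he
  have hmono : StrictMono (fun i : Fin n => ((e i : ℕ))) := by
    intro a b hab
    exact Subtype.coe_lt_coe.mpr (e.strictMono hab)
  calc ∑ i ∈ range n, i = ∑ i : Fin n, (i : ℕ) := (Fin.sum_univ_eq_sum_range (fun i => i) n).symm
    _ ≤ ∑ i : Fin n, ((e i : ℕ)) := Finset.sum_le_sum (fun i _ => aux_strictMono_le hmono i)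
    _ = ∑ a : s, (a : ℕ) := Equiv.sum_comp e.toEquiv (fun a => (a : ℕ))
    _ = ∑ a ∈ s, a := Finset.sum_coe_sort s (fun a => a)
    _ = ∑ i, f i := Finset.sum_image (fun a _ b _ h => hf h)

/-- If `k < n(n-1)/2` then any `g : Fin k → Fin n` has two distinct fibers of equal size. -/
private lemma aux_exists_equal_fibers {n k : ℕ} (hk : k < n * (n - 1) / 2)
    (g : Fin k → Fin n) :
    ∃ i j : Fin n, i ≠ j ∧
      (univ.filter (fun t => g t = i)).card = (univ.filter (fun t => g t = j)).card := by
  classical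
  by_contra hcon
  push_neg at hcon
  have hinj : Function.Injective (fun i : Fin n => (univ.filter (fun t => g t = i)).card) := by
    intro a b hab
    by_contra hne
    exact hcon a b hne hab
  have hsum : ∑ i : Fin n, (univ.filter (fun t => g t = i)).card = k := by
    rw [← Finset.card_eq_sum_card_fiberwise (f := g) (s := univ) (t := univ)
      (fun x _ => mem_univ _), card_univ, Fintype.card_fin]
  have hle := aux_inj_sum_le hinj
  rw [hsum] at hle
  have h2 : (∑ i ∈ range n, i) * 2 = n * (n - 1) := Finset.sum_range_id_mul_two n
  omega

/-- Alternating sum of a monomial of degree `k < N(N-1)/2` vanishes. -/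
private lemma aux_alt_sum {N k : ℕ} (hk : k < N * (N - 1) / 2) (x : Fin N → ℂ)
    (g : Fin k → Fin N) :
    ∑ σ : Equiv.Perm (Fin N), ((Equiv.Perm.sign σ : ℤ) : ℂ) * ∏ t, x (σ (g t)) = 0 := by
  classical
  obtain ⟨i, j, hij, hcard⟩ := aux_exists_equal_fibers hk g
  set e : Fin N → ℕ := fun m => (univ.filter (fun t => g t = m)).card with he
  set τ : Equiv.Perm (Fin N) := Equiv.swap i j with hτ
  have heτ : ∀ m, e (τ m) = e m := by
    intro m
    rcases eq_or_ne m i with rfl | hmi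
    · rw [hτ]; simp [Equiv.swap_apply_left, he]; exact hcard.symm
    rcases eq_or_ne m j with rfl | hmj
    · rw [hτ]; simp [Equiv.swap_apply_right, he]; exact hcard
    · rw [hτ, Equiv.swap_apply_of_ne_of_ne hmi hmj]
  have hfib : ∀ σ : Equiv.Perm (Fin N), (∏ t, x (σ (g t))) = ∏ m, x (σ m) ^ e m := by
    intro σ
    rw [← Finset.prod_fiberwise_of_maps_to (g := g) (fun t _ => mem_univ _)
      (fun t => x (σ (g t)))]
    refine Finset.prod_congr rfl fun m _ => ?_
    rw [Finset.prod_congr rfl (fun t ht => ?_), Finset.prod_const, he]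
    rw [(Finset.mem_filter.mp ht).2]
  have hswap : ∀ σ : Equiv.Perm (Fin N), (∏ t, x ((σ * τ) (g t))) = ∏ t, x (σ (g t)) := by
    intro σ
    rw [hfib, hfib]
    have : ∀ m, x ((σ * τ) m) ^ e m = (fun m' => x (σ m') ^ e (τ m')) (τ m) := by
      intro m
      simp only [Equiv.Perm.mul_apply]
      congr 1
      rw [heτ, heτ]
    calc ∏ m, x ((σ * τ) m) ^ e m = ∏ m, (fun m' => x (σ m') ^ e (τ m')) (τ m) :=
          Finset.prod_congr rfl fun m _ => this m
      _ = ∏ m, x (σ m) ^ e (τ m) := by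
          simpa using Equiv.prod_comp τ (fun m' => x (σ m') ^ e (τ m'))
      _ = ∏ m, x (σ m) ^ e m := Finset.prod_congr rfl fun m _ => by rw [heτ]
  set T : ℂ := ∑ σ : Equiv.Perm (Fin N), ((Equiv.Perm.sign σ : ℤ) : ℂ) * ∏ t, x (σ (g t))
    with hT
  have hstep : ∀ σ : Equiv.Perm (Fin N),
      ((Equiv.Perm.sign (σ * τ) : ℤ) : ℂ) * ∏ t, x ((σ * τ) (g t))
        = -(((Equiv.Perm.sign σ : ℤ) : ℂ) * ∏ t, x (σ (g t))) := by
    intro σ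
    rw [hswap σ, Equiv.Perm.sign_mul, hτ, Equiv.Perm.sign_swap hij]
    push_cast
    ring
  have key : T = -T := by
    conv_lhs => rw [hT]
    rw [← Equiv.sum_comp (Equiv.mulRight τ)
      (fun σ => ((Equiv.Perm.sign σ : ℤ) : ℂ) * ∏ t, x (σ (g t)))]
    simp only [Equiv.coe_mulRight]
    rw [Finset.sum_congr rfl (fun σ _ => hstep σ), Finset.sum_neg_distrib, ← hT]
  have h2 : (2 : ℂ) * T = 0 := by linear_combination key
  have := mul_eq_zero.mp h2
  simpa using this

theorem stmt_8 (N : ℕ) (hN : 2 ≤ N) (x : Fin N → ℂ) (hx : Function.Injective x)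
    (k : ℕ) (hk : k < N * (N - 1) / 2) :
    ∑ σ : Equiv.Perm (Fin N),
      (∑ p ∈ Finset.univ.filter (fun p : Fin N × Fin N => p.1 < p.2),
          (x (σ p.2) - x (σ p.1))) ^ k /
        ∏ p ∈ Finset.univ.filter (fun p : Fin N × Fin N => p.1 < p.2),
          (x (σ p.2) - x (σ p.1)) = 0 := by
  classical
  set P : Finset (Fin N × Fin N) := Finset.univ.filter (fun p : Fin N × Fin N => p.1 < p.2)
    with hP
  -- sign as a complex number
  set ε : Equiv.Perm (Fin N) → ℂ := fun σ => ((Equiv.Perm.sign σ : ℤ) : ℂ) with hε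
  have hε_mul : ∀ σ τ, ε (σ * τ) = ε σ * ε τ := by
    intro σ τ
    simp [hε, Equiv.Perm.sign_mul]
  have hε_sq : ∀ σ, ε σ * ε σ = 1 := by
    intro σ
    simp only [hε]
    rw [← Int.cast_mul, ← Units.val_mul, Int.units_mul_self]
    norm_num
  -- Vandermonde product as determinant: for any v, the product over P
  have hprod_det : ∀ v : Fin N → ℂ,
      ∏ p ∈ P, (v p.2 - v p.1) = (Matrix.vandermonde v).det := by
    intro v
    rw [Matrix.det_vandermonde]
    rw [hP, Finset.prod_filter]
    rw [← Finset.univ_product_univ, Finset.prod_product]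
    refine Finset.prod_congr rfl fun i _ => ?_
    rw [← Finset.prod_filter]
    have hset : (univ.filter fun y : Fin N => (i, y).1 < (i, y).2) = Ioi i := by
      ext j; simp
    rw [hset]
  -- the product over P is nonzero for injective x
  have hD : (∏ p ∈ P, (x p.2 - x p.1)) ≠ 0 := by
    refine Finset.prod_ne_zero_iff.mpr fun p hp => ?_
    rw [hP, Finset.mem_filter] at hp
    exact sub_ne_zero.mpr fun h => (ne_of_lt hp.2) (hx h).symm
  set D : ℂ := ∏ p ∈ P, (x p.2 - x p.1) with hDdef
  -- denominator transforms by sign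
  have hDσ : ∀ σ : Equiv.Perm (Fin N),
      ∏ p ∈ P, (x (σ p.2) - x (σ p.1)) = ε σ * D := by
    intro σ
    have h1 := hprod_det (fun m => x (σ m))
    have h2 : Matrix.vandermonde (fun m => x (σ m))
        = (Matrix.vandermonde x).submatrix σ id := by
      ext a b; simp [Matrix.vandermonde, Matrix.submatrix]
    rw [h1, h2, Matrix.det_permute, ← hprod_det x]
  -- linear form coefficients
  set a : Fin N → ℂ := fun m => ((Iio m).card : ℂ) - ((Ioi m).card : ℂ) with ha
  have hS : ∀ σ : Equiv.Perm (Fin N),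
      ∑ p ∈ P, (x (σ p.2) - x (σ p.1)) = ∑ m, a m * x (σ m) := by
    intro σ
    have hA : ∑ p ∈ P, x (σ p.2) = ∑ m, ((Iio m).card : ℂ) * x (σ m) := by
      rw [hP, Finset.sum_filter, ← Finset.univ_product_univ, Finset.sum_product,
        Finset.sum_comm]
      refine Finset.sum_congr rfl fun m _ => ?_
      rw [← Finset.sum_filter]
      have hset : (univ.filter fun y : Fin N => (y, m).1 < (y, m).2) = Iio m := by
        ext o; simp
      rw [hset]
      simp [Finset.sum_const, nsmul_eq_mul]
    have hB : ∑ p ∈ P, x (σ p.1) = ∑ m, ((Ioi m).card : ℂ) * x (σ m) := by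
      rw [hP, Finset.sum_filter, ← Finset.univ_product_univ, Finset.sum_product]
      refine Finset.sum_congr rfl fun m _ => ?_
      rw [← Finset.sum_filter]
      have hset : (univ.filter fun y : Fin N => (m, y).1 < (m, y).2) = Ioi m := by
        ext o; simp
      rw [hset]
      simp [Finset.sum_const, nsmul_eq_mul]
    rw [Finset.sum_sub_distrib, hA, hB, ← Finset.sum_sub_distrib]
    refine Finset.sum_congr rfl fun m _ => ?_
    rw [ha]; ring
  -- rewrite each term
  have hterm : ∀ σ : Equiv.Perm (Fin N),
      (∑ p ∈ P, (x (σ p.2) - x (σ p.1))) ^ k / ∏ p ∈ P, (x (σ p.2) - x (σ p.1))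
        = ε σ * (∑ m, a m * x (σ m)) ^ k / D := by
    intro σ
    rw [hDσ σ, hS σ]
    rw [div_eq_div_iff (by
        intro h
        rcases mul_eq_zero.mp h with h' | h'
        · have := hε_sq σ; rw [h'] at this; simp at this
        · exact hD h') hD]
    linear_combination (-(∑ m, a m * x (σ m)) ^ k * D) * hε_sq σ
  rw [Finset.sum_congr rfl fun σ _ => hterm σ, ← Finset.sum_div,
    div_eq_zero_iff]
  left
  -- expand the power multinomially
  have hexp : ∀ σ : Equiv.Perm (Fin N), (∑ m, a m * x (σ m)) ^ k
      = ∑ g ∈ Fintype.piFinset (fun _ : Fin k => (univ : Finset (Fin N))),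
          (∏ t, a (g t)) * ∏ t, x (σ (g t)) := by
    intro σ
    have h1 : (∑ m, a m * x (σ m)) ^ k = ∏ _t : Fin k, ∑ m, a m * x (σ m) := by
      rw [Finset.prod_const, Finset.card_univ, Fintype.card_fin]
    rw [h1, Finset.prod_univ_sum]
    exact Finset.sum_congr rfl fun g _ => by rw [← Finset.prod_mul_distrib]
  calc ∑ σ : Equiv.Perm (Fin N), ε σ * (∑ m, a m * x (σ m)) ^ k
      = ∑ σ : Equiv.Perm (Fin N),
          ∑ g ∈ Fintype.piFinset (fun _ : Fin k => (univ : Finset (Fin N))),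
            (∏ t, a (g t)) * (ε σ * ∏ t, x (σ (g t))) := by
        refine Finset.sum_congr rfl fun σ _ => ?_
        rw [hexp σ, Finset.mul_sum]
        exact Finset.sum_congr rfl fun g _ => by ring
    _ = ∑ g ∈ Fintype.piFinset (fun _ : Fin k => (univ : Finset (Fin N))),
          (∏ t, a (g t)) * ∑ σ : Equiv.Perm (Fin N), ε σ * ∏ t, x (σ (g t)) := by
        rw [Finset.sum_comm]
        exact Finset.sum_congr rfl fun g _ => by rw [← Finset.mul_sum]
    _ = 0 := by
        refine Finset.sum_eq_zero fun g _ => ?_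
        rw [aux_alt_sum hk x g, mul_zero]
end

section
/- Let m, n ≥ 1, set N = m + n, and let x_1, …, x_N be pairwise distinct complex numbers. Then the sum over all m-element subsets S of {1,…,N} of 1/∏_{α∈S, β∉S}(x_β − x_α) equals 0. -/
open Finset Polynomial

variable {N : ℕ}

/-- Auxiliary polynomial attached to a subset `S`: it interpolates (up to constants)
the `S`-term of the sum, cleared of its poles at the nodes other than `e`. -/
noncomputable def Qp (n : ℕ) (x : Fin N → ℂ) (e : Fin N) (S : Finset (Fin N)) : Polynomial ℂ :=
  if e ∈ S then
    C ((-1 : ℂ) ^ n / ∏ α ∈ S.erase e, ∏ β ∈ Sᶜ, (x β - x α)) * ∏ j ∈ S.erase e, (X - C (x j))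
  else
    C (1 / ∏ α ∈ S, ∏ β ∈ Sᶜ.erase e, (x β - x α)) * ∏ j ∈ Sᶜ.erase e, (X - C (x j))

lemma pair_prod_ne_zero {x : Fin N → ℂ} (hx : Function.Injective x) {A B : Finset (Fin N)}
    (h : ∀ β ∈ B, β ∉ A) : (∏ α ∈ A, ∏ β ∈ B, (x β - x α)) ≠ 0 :=
  prod_ne_zero_iff.2 fun α hα => prod_ne_zero_iff.2 fun β hβ =>
    sub_ne_zero.2 fun hxx => (h β hβ) ((hx hxx) ▸ hα)

lemma compl_erase_eq (e : Fin N) (S : Finset (Fin N)) :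
    Sᶜ.erase e = (univ.erase e) \ S := by
  ext a; simp only [mem_erase, mem_sdiff, mem_compl, mem_univ, and_true, true_and]

lemma erase_sdiff_erase (e : Fin N) (S : Finset (Fin N)) (he : e ∈ S) :
    (univ.erase e) \ (S.erase e) = Sᶜ := by
  ext a
  simp only [mem_erase, mem_sdiff, mem_compl, mem_univ, and_true, true_and, not_and, not_not]
  constructor
  · rintro ⟨h1, h2⟩; exact h2 h1
  · intro h; exact ⟨fun h' => h (h' ▸ he), fun _ => h⟩

lemma neg_prod_flip (x : Fin N → ℂ) (v : ℂ) (T : Finset (Fin N)) :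
    ∏ β ∈ T, (x β - v) = (-1 : ℂ) ^ T.card * ∏ β ∈ T, (v - x β) := by
  rw [← prod_const, ← prod_mul_distrib]
  exact prod_congr rfl fun b _ => by ring

lemma neg_prod_flip' (x : Fin N → ℂ) (v : ℂ) (T : Finset (Fin N)) :
    ∏ β ∈ T, (v - x β) = (-1 : ℂ) ^ T.card * ∏ β ∈ T, (x β - v) := by
  rw [← prod_const, ← prod_mul_distrib]
  exact prod_congr rfl fun b _ => by ring

/-- Evaluation of `Qp` at the distinguished node `x e`. -/
lemma eval_Qp_e {n : ℕ} {x : Fin N → ℂ} (hx : Function.Injective x) (e : Fin N)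
    (S : Finset (Fin N)) (hS : Sᶜ.card = n) :
    eval (x e) (Qp n x e S) =
      (∏ j ∈ univ.erase e, (x e - x j)) / (∏ α ∈ S, ∏ β ∈ Sᶜ, (x β - x α)) := by
  by_cases he : e ∈ S
  · rw [Qp, if_pos he]
    have hden : ∏ α ∈ S, ∏ β ∈ Sᶜ, (x β - x α)
        = (∏ β ∈ Sᶜ, (x β - x e)) * ∏ α ∈ S.erase e, ∏ β ∈ Sᶜ, (x β - x α) :=
      (mul_prod_erase S _ he).symm
    have hD : ∏ j ∈ univ.erase e, (x e - x j)
        = (∏ j ∈ Sᶜ, (x e - x j)) * ∏ j ∈ S.erase e, (x e - x j) := by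
      rw [← prod_sdiff (fun a ha => mem_erase.2
        ⟨fun h => (mem_erase.1 ha).1 h, mem_univ a⟩ : S.erase e ⊆ univ.erase e),
        erase_sdiff_erase e S he]
    have hflip := neg_prod_flip x (x e) Sᶜ
    rw [hS] at hflip
    have h1 : (∏ α ∈ S.erase e, ∏ β ∈ Sᶜ, (x β - x α)) ≠ 0 :=
      pair_prod_ne_zero hx fun β hβ hβ' => (mem_compl.1 hβ) (erase_subset _ _ hβ')
    have h2 : (∏ j ∈ Sᶜ, (x e - x j)) ≠ 0 :=
      prod_ne_zero_iff.2 fun β hβ => sub_ne_zero.2 fun hxx => (mem_compl.1 hβ) (hx hxx ▸ he)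
    have h3 : ((-1 : ℂ) ^ n) * ((-1 : ℂ) ^ n) = 1 := by
      rw [← pow_add, ← two_mul, pow_mul]; norm_num
    rw [hden, hD, hflip]
    simp only [eval_mul, eval_C, eval_prod, eval_sub, eval_X]
    field_simp
    linear_combination (∏ j ∈ S.erase e, (x e - x j)) * h3
  · rw [Qp, if_neg he]
    have heC : e ∈ Sᶜ := mem_compl.2 he
    have hden : ∏ α ∈ S, ∏ β ∈ Sᶜ, (x β - x α)
        = (∏ α ∈ S, (x e - x α)) * ∏ α ∈ S, ∏ β ∈ Sᶜ.erase e, (x β - x α) := by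
      rw [← prod_mul_distrib]
      exact prod_congr rfl fun α _ => (mul_prod_erase Sᶜ _ heC).symm
    have hD : ∏ j ∈ univ.erase e, (x e - x j)
        = (∏ j ∈ Sᶜ.erase e, (x e - x j)) * ∏ j ∈ S, (x e - x j) := by
      rw [← prod_sdiff (fun a ha => mem_erase.2
        ⟨fun h => he (h ▸ ha), mem_univ a⟩ : S ⊆ univ.erase e), compl_erase_eq]
    have h1 : (∏ α ∈ S, ∏ β ∈ Sᶜ.erase e, (x β - x α)) ≠ 0 :=
      pair_prod_ne_zero hx fun β hβ => mem_compl.1 (erase_subset _ _ hβ)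
    have h2 : (∏ α ∈ S, (x e - x α)) ≠ 0 :=
      prod_ne_zero_iff.2 fun α hα => sub_ne_zero.2 fun hxx => he (hx hxx ▸ hα)
    rw [hden, hD]
    simp only [eval_mul, eval_C, eval_prod, eval_sub, eval_X]
    field_simp

/-- The two members of a cancelling pair. -/
lemma cancel_pair {n : ℕ} {x : Fin N → ℂ} (hx : Function.Injective x) (hn : 1 ≤ n)
    (e k : Fin N) (hek : e ≠ k) (S : Finset (Fin N)) (hk : k ∈ S) (he : e ∉ S)
    (hS : Sᶜ.card = n) :
    eval (x k) (Qp n x e S) + eval (x k) (Qp n x e (insert e (S.erase k))) = 0 := by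
  set S' := insert e (S.erase k) with hS'def
  have heSk : e ∉ S.erase k := fun h => he (erase_subset _ _ h)
  have heS' : e ∈ S' := mem_insert_self _ _
  have hS'e : S'.erase e = S.erase k := erase_insert heSk
  have hS'c : S'ᶜ = insert k (Sᶜ.erase e) := by
    rw [hS'def, compl_insert, compl_erase, erase_insert_of_ne hek.symm]
  have hkC : k ∉ Sᶜ.erase e := fun h => (mem_compl.1 (erase_subset _ _ h)) hk
  have heC : e ∈ Sᶜ := mem_compl.2 he
  have hq : (Sᶜ.erase e).card = n - 1 := by rw [card_erase_of_mem heC, hS]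
  set A := ∏ α ∈ S.erase k, ∏ β ∈ Sᶜ.erase e, (x β - x α) with hA
  set B := ∏ β ∈ Sᶜ.erase e, (x β - x k) with hB
  set Cc := ∏ α ∈ S.erase k, (x k - x α) with hC
  have hcS : (∏ α ∈ S, ∏ β ∈ Sᶜ.erase e, (x β - x α)) = B * A :=
    (mul_prod_erase S _ hk).symm
  have hcS' : (∏ α ∈ S'.erase e, ∏ β ∈ S'ᶜ, (x β - x α)) = Cc * A := by
    rw [hS'e, hS'c, ← prod_mul_distrib]
    exact prod_congr rfl fun α _ => prod_insert hkC
  have hflip : (∏ j ∈ Sᶜ.erase e, (x k - x j)) = (-1 : ℂ) ^ (n - 1) * B := by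
    rw [neg_prod_flip' x (x k) (Sᶜ.erase e), hq, hB]
  have hA0 : A ≠ 0 := pair_prod_ne_zero hx fun β hβ h' =>
    (mem_compl.1 (erase_subset _ _ hβ)) (erase_subset _ _ h')
  have hB0 : B ≠ 0 := prod_ne_zero_iff.2 fun β hβ => sub_ne_zero.2 fun hxx =>
    (mem_compl.1 (erase_subset _ _ hβ)) (hx hxx ▸ hk)
  have hC0 : Cc ≠ 0 := prod_ne_zero_iff.2 fun α hα => sub_ne_zero.2 fun hxx =>
    (mem_erase.1 hα).1 (hx hxx).symm
  rw [Qp, if_neg he, Qp, if_pos heS']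
  simp only [eval_mul, eval_C, eval_prod, eval_sub, eval_X]
  rw [hcS, hcS', hflip, hS'e, hC.symm, show n = (n-1)+1 from (Nat.succ_pred_eq_of_pos hn).symm,
    pow_succ]
  field_simp
  ring
  rw [Nat.add_sub_cancel_left]; ring

/-- Terms whose subset contains both or neither of `e`, `k` vanish at `x k`. -/
lemma eval_Qp_same_side {n : ℕ} (x : Fin N → ℂ) (e k : Fin N) (hek : e ≠ k)
    (S : Finset (Fin N)) (h : (k ∈ S ↔ e ∈ S)) :
    eval (x k) (Qp n x e S) = 0 := by
  by_cases he : e ∈ S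
  · rw [Qp, if_pos he]
    simp only [eval_mul, eval_C, eval_prod, eval_sub, eval_X]
    exact mul_eq_zero_of_right _
      (prod_eq_zero (mem_erase.2 ⟨hek.symm, h.2 he⟩) (sub_self _))
  · rw [Qp, if_neg he]
    simp only [eval_mul, eval_C, eval_prod, eval_sub, eval_X]
    exact mul_eq_zero_of_right _
      (prod_eq_zero (mem_erase.2 ⟨hek.symm, mem_compl.2 fun hk => he (h.1 hk)⟩) (sub_self _))

lemma natDegree_Qp_le {n : ℕ} (x : Fin N → ℂ) (e : Fin N) (S : Finset (Fin N)) :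
    natDegree (Qp n x e S) ≤ if e ∈ S then (S.erase e).card else (Sᶜ.erase e).card := by
  have key : ∀ (a : ℂ) (T : Finset (Fin N)),
      natDegree (C a * ∏ j ∈ T, (X - C (x j))) ≤ T.card := fun a T =>
    (natDegree_C_mul_le _ _).trans (le_of_eq (by
      rw [natDegree_prod_of_monic _ _ fun j _ => monic_X_sub_C _]
      simp [natDegree_X_sub_C]))
  rw [Qp]
  split_ifs with he
  · exact key _ _
  · exact key _ _

theorem stmt_9 (m n : ℕ) (hm : 1 ≤ m) (hn : 1 ≤ n) (x : Fin (m + n) → ℂ)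
    (hx : Function.Injective x) :
    ∑ S ∈ Finset.univ.powersetCard m,
      (1 : ℂ) / ∏ α ∈ S, ∏ β ∈ Sᶜ, (x β - x α) = 0 := by
  have hN2 : 2 ≤ m + n := by omega
  obtain ⟨e⟩ : Nonempty (Fin (m + n)) := ⟨⟨0, by omega⟩⟩
  have hcard_univ : (univ : Finset (Fin (m + n))).card = m + n := by simp
  have hcompl : ∀ S ∈ (univ : Finset (Fin (m+n))).powersetCard m, Sᶜ.card = n := by
    intro S hS
    rw [card_compl, mem_powersetCard_univ.1 hS, Fintype.card_fin]
    omega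
  set P : Polynomial ℂ := ∑ S ∈ (univ : Finset (Fin (m+n))).powersetCard m, Qp n x e S with hPdef
  -- the polynomial vanishes at every node other than e
  have hroot : ∀ k : Fin (m + n), k ≠ e → eval (x k) P = 0 := by
    intro k hke
    rw [hPdef, eval_finset_sum]
    set g : Finset (Fin (m+n)) → Finset (Fin (m+n)) := fun S =>
      if k ∈ S ∧ e ∉ S then insert e (S.erase k)
      else if e ∈ S ∧ k ∉ S then insert k (S.erase e) else S with hgdef
    have hgmem : ∀ S ∈ (univ : Finset (Fin (m+n))).powersetCard m,
        g S ∈ (univ : Finset (Fin (m+n))).powersetCard m := by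
      intro S hS
      have hSc := mem_powersetCard_univ.1 hS
      rw [hgdef]; dsimp only
      split_ifs with h1 h2
      · rw [mem_powersetCard_univ, card_insert_of_notMem
          (fun h => h1.2 (erase_subset _ _ h)), card_erase_of_mem h1.1, hSc]
        have : 1 ≤ m := hm
        omega
      · rw [mem_powersetCard_univ, card_insert_of_notMem
          (fun h => h2.2 (erase_subset _ _ h)), card_erase_of_mem h2.1, hSc]
        omega
      · exact hS
    have hgg : ∀ S ∈ (univ : Finset (Fin (m+n))).powersetCard m, g (g S) = S := by
      intro S _
      rw [hgdef]; dsimp only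
      by_cases h1 : k ∈ S ∧ e ∉ S
      · rw [if_pos h1]
        have hkn : k ∉ insert e (S.erase k) := by
          simp only [mem_insert, mem_erase]
          push_neg
          exact ⟨hke, fun h _ => h rfl⟩
        rw [if_neg (fun h => hkn h.1), if_pos ⟨mem_insert_self _ _, hkn⟩,
          erase_insert (fun h => h1.2 (erase_subset _ _ h)), insert_erase h1.1]
      · rw [if_neg h1]
        by_cases h2 : e ∈ S ∧ k ∉ S
        · rw [if_pos h2]
          have hen : e ∉ insert k (S.erase e) := by
            simp only [mem_insert, mem_erase]
            push_neg
            exact ⟨hke.symm, fun h _ => h rfl⟩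
          rw [if_pos ⟨mem_insert_self _ _, hen⟩,
            erase_insert (fun h => h2.2 (erase_subset _ _ h)), insert_erase h2.1]
        · rw [if_neg h2, if_neg h1, if_neg h2]
    refine sum_involution (fun S _ => g S) ?_ ?_ hgmem hgg
    · -- cancellation
      intro S hS
      have hSc := mem_powersetCard_univ.1 hS
      rw [hgdef]; dsimp only
      by_cases h1 : k ∈ S ∧ e ∉ S
      · rw [if_pos h1]
        exact cancel_pair hx hn e k hke.symm S h1.1 h1.2 (hcompl S hS)
      · by_cases h2 : e ∈ S ∧ k ∉ S
        · rw [if_neg h1, if_pos h2]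
          set S₀ := insert k (S.erase e) with hS0def
          have hkS0 : k ∈ S₀ := mem_insert_self _ _
          have heS0 : e ∉ S₀ := by
            simp only [hS0def, mem_insert, mem_erase]
            push_neg
            exact ⟨hke.symm, fun h _ => h rfl⟩
          have hS0mem : S₀ ∈ (univ : Finset (Fin (m+n))).powersetCard m := by
            rw [mem_powersetCard_univ, hS0def, card_insert_of_notMem
              (fun h => h2.2 (erase_subset _ _ h)), card_erase_of_mem h2.1, hSc]
            omega
          have hback : insert e (S₀.erase k) = S := by
            rw [hS0def, erase_insert (fun h => h2.2 (erase_subset _ _ h)), insert_erase h2.1]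
          have := cancel_pair hx hn e k hke.symm S₀ hkS0 heS0
            (hcompl S₀ hS0mem)
          rw [hback] at this
          linear_combination this
        · rw [if_neg h1, if_neg h2]
          have hsame : (k ∈ S ↔ e ∈ S) := by tauto
          rw [eval_Qp_same_side x e k hke.symm S hsame]
          ring
    · -- g S ≠ S when term nonzero
      intro S hS hfS
      rw [hgdef]; dsimp only
      by_cases h1 : k ∈ S ∧ e ∉ S
      · rw [if_pos h1]
        exact fun h => h1.2 (h ▸ mem_insert_self e _)
      · by_cases h2 : e ∈ S ∧ k ∉ S
        · rw [if_neg h1, if_pos h2]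
          exact fun h => h2.2 (h ▸ mem_insert_self k _)
        · exact absurd (eval_Qp_same_side x e k hke.symm S (by tauto)) hfS
  -- degree bound
  have hdeg : natDegree P < m + n - 1 := by
    have : natDegree P ≤ m + n - 2 := by
      apply natDegree_sum_le_of_forall_le
      intro S hS
      have hSc := mem_powersetCard_univ.1 hS
      have hc : Sᶜ.card = n := hcompl S hS
      refine (natDegree_Qp_le x e S).trans ?_
      by_cases he : e ∈ S
      · rw [if_pos he, card_erase_of_mem he, hSc]; omega
      · rw [if_neg he, card_erase_of_mem (mem_compl.2 he), hc]; omega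
    omega
  -- hence P = 0
  have hP0 : P = 0 := by
    apply eq_zero_of_natDegree_lt_card_of_eval_eq_zero' P ((univ.erase e).image x)
    · intro v hv
      obtain ⟨k, hk, rfl⟩ := mem_image.1 hv
      exact hroot k (mem_erase.1 hk).1
    · rw [card_image_of_injOn (Function.Injective.injOn hx),
        card_erase_of_mem (mem_univ e), hcard_univ]
      omega
  -- evaluate at x e
  have hD0 : (∏ j ∈ univ.erase e, (x e - x j)) ≠ 0 :=
    prod_ne_zero_iff.2 fun j hj => sub_ne_zero.2 fun hxx => (mem_erase.1 hj).1 (hx hxx).symm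
  have heval : eval (x e) P = (∏ j ∈ univ.erase e, (x e - x j)) *
      ∑ S ∈ (univ : Finset (Fin (m+n))).powersetCard m,
        (1 : ℂ) / ∏ α ∈ S, ∏ β ∈ Sᶜ, (x β - x α) := by
    rw [hPdef, eval_finset_sum, mul_sum]
    refine sum_congr rfl fun S hS => ?_
    rw [eval_Qp_e hx e S (hcompl S hS)]
    ring
  rw [hP0] at heval
  simp only [eval_zero] at heval
  exact (mul_eq_zero.1 heval.symm).resolve_left hD0
end

section
/- Let m, n ≥ 1 with mn ≥ 2, set N = m + n, and let x_1, …, x_N be pairwise distinct complex numbers. Then the sum over all m-element subsets S of {1,…,N} of (∑_{α∈S, β∉S}(x_β − x_α)) / ∏_{α∈S, β∉S}(x_β − x_α) equals 0. -/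
open Finset Polynomial

lemma lagrange_vanish {N : ℕ} (x : Fin N → ℂ) (hx : Function.Injective x)
    (k : ℕ) (hk : k + 2 ≤ N) :
    ∑ i, x i ^ k * (∏ j ∈ univ.erase i, (x i - x j))⁻¹ = 0 := by
  have hinj : Set.InjOn x ((univ : Finset (Fin N)) : Set (Fin N)) := fun a _ b _ h => hx h
  have hdeg : ((X : ℂ[X]) ^ k).degree < (univ : Finset (Fin N)).card := by
    rw [degree_X_pow]
    exact_mod_cast by simpa using (by omega : k < N)
  have h1 : ((X : ℂ[X]) ^ k) = Lagrange.interpolate univ x (fun i => (x i) ^ k) := by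
    have := Lagrange.eq_interpolate hinj hdeg
    simpa using this
  have h2 := congrArg (fun p : ℂ[X] => p.coeff (N - 1)) h1
  simp only [Lagrange.interpolate_apply, finset_sum_coeff, coeff_C_mul, coeff_X_pow] at h2
  rw [if_neg (by omega)] at h2
  have hbasis : ∀ i : Fin N, (Lagrange.basis univ x i).coeff (N - 1)
      = (∏ j ∈ univ.erase i, (x i - x j))⁻¹ := by
    intro i
    have hnd : (Lagrange.basis univ x i).natDegree = N - 1 := by
      rw [Lagrange.natDegree_basis hinj (mem_univ i)]
      simp
    have : (Lagrange.basis univ x i).coeff (N - 1)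
        = (Lagrange.basis univ x i).leadingCoeff := by
      rw [Polynomial.leadingCoeff, hnd]
    rw [this, Lagrange.basis, leadingCoeff_prod, ← Finset.prod_inv_distrib]
    refine Finset.prod_congr rfl fun j hj => ?_
    have hne : x i ≠ x j := fun h => (Finset.mem_erase.1 hj).1 (hx h).symm
    rw [Lagrange.basisDivisor, leadingCoeff_mul, leadingCoeff_C, leadingCoeff_X_sub_C, mul_one]
  rw [Finset.sum_congr rfl (fun i _ => by rw [hbasis i])] at h2
  exact h2.symm

lemma swap_prod {m : ℕ} (f : Fin m → Fin m → ℂ) :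
    ∏ a, ∏ b ∈ Iio a, f a b = ∏ a, ∏ b ∈ Ioi a, f b a := by
  rw [Finset.prod_sigma', Finset.prod_sigma']
  refine Finset.prod_nbij' (fun p => ⟨p.2, p.1⟩) (fun p => ⟨p.2, p.1⟩) ?_ ?_ ?_ ?_ ?_
  · intro a ha; simp only [Finset.mem_sigma, Finset.mem_Iio, Finset.mem_Ioi, Finset.mem_univ,
      true_and] at ha ⊢; exact ha
  · intro a ha; simp only [Finset.mem_sigma, Finset.mem_Iio, Finset.mem_Ioi, Finset.mem_univ,
      true_and] at ha ⊢; exact ha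
  · intro a _; rfl
  · intro a _; rfl
  · intro a _; rfl

lemma erase_eq_Iio_union_Ioi {m : ℕ} (a : Fin m) :
    (univ : Finset (Fin m)).erase a = Iio a ∪ Ioi a := by
  ext b
  simp only [mem_erase, mem_union, mem_Iio, mem_Ioi, mem_univ, and_true]
  exact ⟨fun h => h.lt_or_gt, fun h => h.elim (fun h' => h'.ne) (fun h' => h'.ne')⟩

lemma B1 {m : ℕ} (y : Fin m → ℂ) :
    ∏ a, ∏ b ∈ univ.erase a, (y b - y a)
      = (-1 : ℂ) ^ (∑ a : Fin m, (Finset.Ioi a).card) * ((Matrix.vandermonde y).det) ^ 2 := by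
  have h1 : ∏ a, ∏ b ∈ univ.erase a, (y b - y a)
      = (∏ a, ∏ b ∈ Iio a, (y b - y a)) * (∏ a, ∏ b ∈ Ioi a, (y b - y a)) := by
    rw [← Finset.prod_mul_distrib]
    refine Finset.prod_congr rfl fun a _ => ?_
    rw [erase_eq_Iio_union_Ioi, Finset.prod_union]
    refine Finset.disjoint_left.2 ?_
    intro b hb hb'
    exact absurd (mem_Ioi.1 hb') (mem_Iio.1 hb).asymm
  have h2 : ∏ a, ∏ b ∈ Iio a, (y b - y a) = ∏ a, ∏ b ∈ Ioi a, (y a - y b) :=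
    swap_prod (fun a b => y b - y a)
  have h3 : ∏ a, ∏ b ∈ Ioi a, (y a - y b)
      = (-1 : ℂ) ^ (∑ a : Fin m, (Finset.Ioi a).card) * ∏ a, ∏ b ∈ Ioi a, (y b - y a) := by
    calc ∏ a, ∏ b ∈ Ioi a, (y a - y b)
        = ∏ a, ((-1 : ℂ) ^ (Finset.Ioi a).card * ∏ b ∈ Ioi a, (y b - y a)) := by
          refine Finset.prod_congr rfl fun a _ => ?_
          rw [← Finset.prod_const, ← Finset.prod_mul_distrib]
          exact Finset.prod_congr rfl fun b _ => by ring
      _ = (∏ a, (-1 : ℂ) ^ (Finset.Ioi a).card) * ∏ a, ∏ b ∈ Ioi a, (y b - y a) :=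
          Finset.prod_mul_distrib
      _ = _ := by rw [Finset.prod_pow_eq_pow_sum]
  rw [h1, h2, h3, Matrix.det_vandermonde]
  ring

lemma B2 {m : ℕ} (y : Fin m → ℂ) :
    (Matrix.vandermonde y).det
      = ∑ σ : Equiv.Perm (Fin m), Equiv.Perm.sign σ • ∏ a, y a ^ ((σ a : ℕ)) := by
  rw [← Matrix.det_transpose, Matrix.det_apply]
  refine Finset.sum_congr rfl fun σ _ => ?_
  simp [Matrix.vandermonde]
lemma lagrange_vanish' {N : ℕ} (x : Fin N → ℂ) (hx : Function.Injective x)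
    (k : ℕ) (hk : k + 2 ≤ N) :
    ∑ i, x i ^ k * (∏ j ∈ univ.erase i, (x j - x i))⁻¹ = 0 := by
  have key : ∀ i : Fin N, (∏ j ∈ univ.erase i, (x j - x i))⁻¹
      = ((-1 : ℂ) ^ (N - 1))⁻¹ * (∏ j ∈ univ.erase i, (x i - x j))⁻¹ := by
    intro i
    have h1 : ∏ j ∈ univ.erase i, (x j - x i)
        = (-1 : ℂ) ^ (N - 1) * ∏ j ∈ univ.erase i, (x i - x j) := by
      have hc : (univ.erase i).card = N - 1 := by simp
      calc ∏ j ∈ univ.erase i, (x j - x i)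
          = ∏ j ∈ univ.erase i, ((-1 : ℂ) * (x i - x j)) :=
            Finset.prod_congr rfl fun j _ => by ring
        _ = (-1 : ℂ) ^ (univ.erase i).card * ∏ j ∈ univ.erase i, (x i - x j) := by
            rw [Finset.prod_mul_distrib, Finset.prod_const]
        _ = _ := by rw [hc]
    rw [h1, mul_inv]
  calc ∑ i, x i ^ k * (∏ j ∈ univ.erase i, (x j - x i))⁻¹
      = ((-1 : ℂ) ^ (N - 1))⁻¹ * ∑ i, x i ^ k * (∏ j ∈ univ.erase i, (x i - x j))⁻¹ := by
        rw [Finset.mul_sum]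
        exact Finset.sum_congr rfl fun i _ => by rw [key i]; ring
    _ = 0 := by rw [lagrange_vanish x hx k hk, mul_zero]

lemma pigeonhole {m n p : ℕ} (hm : 1 ≤ m) (hp : p < m * n)
    (σ τ : Equiv.Perm (Fin m)) (a₀ : Fin m) :
    ∃ a : Fin m, (σ a : ℕ) + (τ a : ℕ) + (if a = a₀ then p else 0) + 2 ≤ m + n := by
  by_contra hcon
  push_neg at hcon
  have hsum : ∀ ρ : Equiv.Perm (Fin m), (∑ a : Fin m, (ρ a : ℕ)) * 2 = m * (m - 1) := by
    intro ρ
    have h1 : ∑ a : Fin m, (ρ a : ℕ) = ∑ a : Fin m, (a : ℕ) :=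
      Equiv.sum_comp ρ (fun a => (a : ℕ))
    rw [h1, Fin.sum_univ_eq_sum_range (fun i => i)]
    exact Finset.sum_range_id_mul_two m
  have h2 : ∑ a : Fin m, ((σ a : ℕ) + (τ a : ℕ) + (if a = a₀ then p else 0) + 1)
      = (∑ a : Fin m, (σ a : ℕ)) + (∑ a : Fin m, (τ a : ℕ)) + p + m := by
    rw [Finset.sum_add_distrib, Finset.sum_add_distrib, Finset.sum_add_distrib]
    simp [Finset.sum_ite_eq']
  have hle : m * (m + n) ≤ (∑ a : Fin m, (σ a : ℕ)) + (∑ a : Fin m, (τ a : ℕ)) + p + m := by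
    calc m * (m + n) = ∑ _a : Fin m, (m + n) := by
          rw [Finset.sum_const, Finset.card_univ, Fintype.card_fin, smul_eq_mul]
      _ ≤ ∑ a : Fin m, ((σ a : ℕ) + (τ a : ℕ) + (if a = a₀ then p else 0) + 1) :=
          Finset.sum_le_sum fun a _ => by have := hcon a; omega
      _ = _ := h2
  have hσ := hsum σ
  have hτ := hsum τ
  have hmm : m ≤ m * m := Nat.le_mul_of_pos_left m hm
  have e1 : m * (m + n) = m * m + m * n := by ring
  have e2 : m * (m - 1) = m * m - m := by
    cases m with
    | zero => simp
    | succ k => rw [Nat.succ_sub_one]; ring_nf; omega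
  omega
lemma triple_sum_factor {ι κ : Type*} [Fintype ι] [Fintype κ] (f g : κ → ℂ) (h : ι → ℂ) (C : ℂ) :
    ∑ σ : κ, ∑ τ : κ, ∑ a₀ : ι, f σ * g τ * h a₀ * C
      = (∑ σ, f σ) * (∑ τ, g τ) * (∑ a₀, h a₀) * C := by
  calc ∑ σ : κ, ∑ τ : κ, ∑ a₀ : ι, f σ * g τ * h a₀ * C
      = ∑ σ : κ, ∑ τ : κ, (f σ * g τ * C) * ∑ a₀, h a₀ := by
        refine Finset.sum_congr rfl fun σ _ => Finset.sum_congr rfl fun τ _ => ?_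
        rw [Finset.mul_sum]
        exact Finset.sum_congr rfl fun a₀ _ => by ring
    _ = ∑ σ : κ, (f σ * C * (∑ a₀, h a₀)) * ∑ τ, g τ := by
        refine Finset.sum_congr rfl fun σ _ => ?_
        rw [Finset.mul_sum]
        exact Finset.sum_congr rfl fun τ _ => by ring
    _ = ((C * (∑ a₀, h a₀)) * (∑ τ, g τ)) * ∑ σ, f σ := by
        rw [Finset.mul_sum]
        exact Finset.sum_congr rfl fun σ _ => by ring
    _ = _ := by ring

lemma total_zero {m n : ℕ} (p : ℕ) (hm : 1 ≤ m) (hp : p < m * n) (x : Fin (m + n) → ℂ)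
    (hx : Function.Injective x) :
    ∑ v : Fin m → Fin (m + n),
      (∑ a, x (v a) ^ p) * (∏ a, ∏ b ∈ univ.erase a, (x (v b) - x (v a)))
        * ∏ a, (∏ j ∈ univ.erase (v a), (x j - x (v a)))⁻¹ = 0 := by
  set c : Fin (m + n) → ℂ := fun i => ∏ j ∈ univ.erase i, (x j - x i) with hc
  set s : Equiv.Perm (Fin m) → ℂ := fun σ => ((Equiv.Perm.sign σ : ℤ) : ℂ) with hs
  set ε : ℂ := (-1 : ℂ) ^ (∑ a : Fin m, (Finset.Ioi a).card) with hε
  set E : Equiv.Perm (Fin m) → Equiv.Perm (Fin m) → Fin m → Fin m → ℕ :=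
    fun σ τ a₀ a => (σ a : ℕ) + (τ a : ℕ) + (if a = a₀ then p else 0) with hE
  have hdet' : ∀ v : Fin m → Fin (m + n),
      (Matrix.vandermonde fun a => x (v a)).det
        = ∑ σ : Equiv.Perm (Fin m), s σ * ∏ a, x (v a) ^ ((σ a : ℕ)) := by
    intro v
    rw [B2]
    exact Finset.sum_congr rfl fun σ _ => by
      rw [hs]; simp [Units.smul_def, zsmul_eq_mul]
  have hprod : ∀ (v : Fin m → Fin (m + n)) (σ τ : Equiv.Perm (Fin m)) (a₀ : Fin m),
      ∏ a, (x (v a) ^ (E σ τ a₀ a) * (c (v a))⁻¹)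
        = (∏ a, x (v a) ^ ((σ a : ℕ))) * (∏ a, x (v a) ^ ((τ a : ℕ))) * x (v a₀) ^ p
          * ∏ a, (c (v a))⁻¹ := by
    intro v σ τ a₀
    rw [Finset.prod_mul_distrib]
    congr 1
    simp only [hE, pow_add]
    rw [Finset.prod_mul_distrib, Finset.prod_mul_distrib]
    congr 1
    calc ∏ a, x (v a) ^ (if a = a₀ then p else 0)
        = ∏ a, (if a = a₀ then x (v a) ^ p else 1) :=
          Finset.prod_congr rfl fun a _ => by split <;> simp
      _ = x (v a₀) ^ p := by simp
  have hv : ∀ v : Fin m → Fin (m + n),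
      (∑ a, x (v a) ^ p) * (∏ a, ∏ b ∈ univ.erase a, (x (v b) - x (v a)))
          * ∏ a, (c (v a))⁻¹
        = ε * ∑ σ, ∑ τ, ∑ a₀, s σ * s τ * ∏ a, (x (v a) ^ (E σ τ a₀ a) * (c (v a))⁻¹) := by
    intro v
    have hB := B1 (fun a => x (v a))
    rw [hB, hdet' v]
    rw [show (∑ σ, ∑ τ, ∑ a₀, s σ * s τ * ∏ a, (x (v a) ^ (E σ τ a₀ a) * (c (v a))⁻¹))
        = ∑ σ, ∑ τ, ∑ a₀, (s σ * ∏ a, x (v a) ^ ((σ a : ℕ)))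
            * (s τ * ∏ a, x (v a) ^ ((τ a : ℕ))) * (x (v a₀) ^ p) * ∏ a, (c (v a))⁻¹ from
      Finset.sum_congr rfl fun σ _ => Finset.sum_congr rfl fun τ _ =>
        Finset.sum_congr rfl fun a₀ _ => by rw [hprod v σ τ a₀]; ring]
    rw [triple_sum_factor]
    ring
  rw [show (∑ v : Fin m → Fin (m + n),
        (∑ a, x (v a) ^ p) * (∏ a, ∏ b ∈ univ.erase a, (x (v b) - x (v a)))
          * ∏ a, (∏ j ∈ univ.erase (v a), (x j - x (v a)))⁻¹)
      = ∑ v : Fin m → Fin (m + n),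
          ε * ∑ σ, ∑ τ, ∑ a₀, s σ * s τ * ∏ a, (x (v a) ^ (E σ τ a₀ a) * (c (v a))⁻¹) from
    Finset.sum_congr rfl fun v _ => hv v]
  rw [← Finset.mul_sum]
  have hinner : ∀ (σ τ : Equiv.Perm (Fin m)) (a₀ : Fin m),
      ∑ v : Fin m → Fin (m + n), ∏ a, (x (v a) ^ (E σ τ a₀ a) * (c (v a))⁻¹) = 0 := by
    intro σ τ a₀
    rw [← Fintype.piFinset_univ,
      Finset.sum_prod_piFinset univ (fun a j => x j ^ E σ τ a₀ a * (c j)⁻¹)]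
    obtain ⟨a, ha⟩ := pigeonhole hm hp σ τ a₀
    refine Finset.prod_eq_zero (Finset.mem_univ a) ?_
    exact lagrange_vanish' x hx (E σ τ a₀ a) ha
  have : ∑ v : Fin m → Fin (m + n),
      ∑ σ, ∑ τ, ∑ a₀, s σ * s τ * ∏ a, (x (v a) ^ (E σ τ a₀ a) * (c (v a))⁻¹) = 0 := by
    rw [Finset.sum_comm]
    refine Finset.sum_eq_zero fun σ _ => ?_
    rw [Finset.sum_comm]
    refine Finset.sum_eq_zero fun τ _ => ?_
    rw [Finset.sum_comm]
    refine Finset.sum_eq_zero fun a₀ _ => ?_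
    rw [← Finset.mul_sum, hinner σ τ a₀, mul_zero]
  rw [this, mul_zero]
lemma key {m n : ℕ} (hm : 1 ≤ m) (p : ℕ) (hp : p < m * n) (x : Fin (m + n) → ℂ)
    (hx : Function.Injective x) :
    ∑ S ∈ (univ : Finset (Fin (m + n))).powersetCard m,
      (∑ α ∈ S, x α ^ p) / ∏ α ∈ S, ∏ β ∈ Sᶜ, (x β - x α) = 0 := by
  classical
  set c : Fin (m + n) → ℂ := fun i => ∏ j ∈ univ.erase i, (x j - x i) with hc
  set Φ : (Fin m → Fin (m + n)) → ℂ := fun v =>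
    (∑ a, x (v a) ^ p) * (∏ a, ∏ b ∈ univ.erase a, (x (v b) - x (v a)))
      * ∏ a, (c (v a))⁻¹ with hΦ
  set T : Finset (Fin (m + n)) → ℂ := fun S =>
    (∑ α ∈ S, x α ^ p) * (∏ α ∈ S, ∏ β ∈ S.erase α, (x β - x α)) * ∏ α ∈ S, (c α)⁻¹ with hT
  have hcne : ∀ i, c i ≠ 0 := by
    intro i
    refine Finset.prod_ne_zero_iff.2 fun j hj => sub_ne_zero.2 fun h => ?_
    exact (Finset.mem_erase.1 hj).1 (hx h)
  -- step 1 : per subset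
  have step1 : ∀ S ∈ (univ : Finset (Fin (m + n))).powersetCard m,
      (∑ α ∈ S, x α ^ p) / ∏ α ∈ S, ∏ β ∈ Sᶜ, (x β - x α) = T S := by
    intro S hS
    have hsplit : ∀ α ∈ S,
        (∏ β ∈ Sᶜ, (x β - x α)) * (∏ β ∈ S.erase α, (x β - x α)) = c α := by
      intro α hα
      rw [hc]
      rw [← Finset.prod_union ((disjoint_compl_left (a := S)).mono_right
        (Finset.erase_subset _ _))]
      congr 1
      ext β
      simp only [Finset.mem_union, Finset.mem_compl, Finset.mem_erase, Finset.mem_univ, and_true]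
      constructor
      · rintro (h | ⟨h, _⟩)
        · exact fun e => h (e ▸ hα)
        · exact h
      · intro h
        by_cases hβ : β ∈ S
        · exact Or.inr ⟨h, hβ⟩
        · exact Or.inl hβ
    have hPD : (∏ α ∈ S, ∏ β ∈ Sᶜ, (x β - x α)) * (∏ α ∈ S, ∏ β ∈ S.erase α, (x β - x α))
        = ∏ α ∈ S, c α := by
      rw [← Finset.prod_mul_distrib]
      exact Finset.prod_congr rfl hsplit
    have hD0 : (∏ α ∈ S, ∏ β ∈ S.erase α, (x β - x α)) ≠ 0 := by
      refine Finset.prod_ne_zero_iff.2 fun α _ => Finset.prod_ne_zero_iff.2 fun β hβ => ?_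
      exact sub_ne_zero.2 fun h => (Finset.mem_erase.1 hβ).1 (hx h)
    have hC0 : (∏ α ∈ S, c α) ≠ 0 := Finset.prod_ne_zero_iff.2 fun α _ => hcne α
    have hP0 : (∏ α ∈ S, ∏ β ∈ Sᶜ, (x β - x α)) ≠ 0 := by
      intro h
      rw [h, zero_mul] at hPD
      exact hC0 hPD.symm
    have h9 : (∏ α ∈ S, c α)⁻¹ = (∏ α ∈ S, ∏ β ∈ Sᶜ, (x β - x α))⁻¹
        * (∏ α ∈ S, ∏ β ∈ S.erase α, (x β - x α))⁻¹ := by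
      rw [← hPD, mul_inv]
    rw [hT]
    simp only
    rw [Finset.prod_inv_distrib, h9, div_eq_mul_inv]
    calc (∑ α ∈ S, x α ^ p) * (∏ α ∈ S, ∏ β ∈ Sᶜ, (x β - x α))⁻¹
        = (∑ α ∈ S, x α ^ p) * (∏ α ∈ S, ∏ β ∈ Sᶜ, (x β - x α))⁻¹
            * ((∏ α ∈ S, ∏ β ∈ S.erase α, (x β - x α))
              * (∏ α ∈ S, ∏ β ∈ S.erase α, (x β - x α))⁻¹) := by
          rw [mul_inv_cancel₀ hD0, mul_one]
      _ = _ := by ring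
  -- transfer
  have htrans : ∀ (S : Finset (Fin (m + n))) (v : Fin m → Fin (m + n)),
      Function.Injective v → Finset.image v univ = S → Φ v = T S := by
    intro S v hvinj hvim
    have hinj2 : ∀ a ∈ (univ : Finset (Fin m)), ∀ b ∈ univ, v a = v b → a = b :=
      fun a _ b _ h => hvinj h
    have h1 : ∑ α ∈ S, x α ^ p = ∑ a, x (v a) ^ p := by
      rw [← hvim, Finset.sum_image hinj2]
    have h3 : ∏ α ∈ S, (c α)⁻¹ = ∏ a, (c (v a))⁻¹ := by
      rw [← hvim, Finset.prod_image hinj2]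
    have h2 : ∏ α ∈ S, ∏ β ∈ S.erase α, (x β - x α)
        = ∏ a, ∏ b ∈ univ.erase a, (x (v b) - x (v a)) := by
      rw [← hvim, Finset.prod_image hinj2]
      refine Finset.prod_congr rfl fun a _ => ?_
      rw [← Finset.image_erase hvinj]
      exact Finset.prod_image fun a' ha' b' hb' h => hvinj h
    rw [hΦ, hT]
    simp only
    rw [h1, h2, h3]
  -- fiber sums
  have hfib : ∀ S : Finset (Fin (m + n)),
      (∑ v ∈ univ.filter (fun v : Fin m → Fin (m + n) => Finset.image v univ = S), Φ v)
        = if S.card = m then (Nat.factorial m : ℂ) * T S else 0 := by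
    intro S
    by_cases hSc : S.card = m
    · rw [if_pos hSc]
      set v₀ : Fin m → Fin (m + n) := fun a => ((S.orderIsoOfFin hSc) a : Fin (m + n)) with hv₀
      have hv₀inj : Function.Injective v₀ := fun a b h =>
        (S.orderIsoOfFin hSc).injective (Subtype.ext h)
      have hv₀mem : ∀ a, v₀ a ∈ S := fun a => ((S.orderIsoOfFin hSc) a).2
      have hv₀im : Finset.image v₀ univ = S := by
        refine Finset.eq_of_subset_of_card_le (Finset.image_subset_iff.2 fun a _ => hv₀mem a) ?_
        rw [Finset.card_image_of_injective _ hv₀inj, Finset.card_univ, Fintype.card_fin, hSc]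
      have hv₀surj : ∀ s ∈ S, ∃ a, v₀ a = s := by
        intro s hs
        refine ⟨(S.orderIsoOfFin hSc).symm ⟨s, hs⟩, ?_⟩
        exact congrArg Subtype.val ((S.orderIsoOfFin hSc).apply_symm_apply ⟨s, hs⟩)
      haveI : Nonempty (Fin m) := ⟨⟨0, hm⟩⟩
      set g : Fin (m + n) → Fin m := Function.invFun v₀ with hg
      have hgv₀ : ∀ a, g (v₀ a) = a := fun a => Function.leftInverse_invFun hv₀inj a
      have hv₀g : ∀ s ∈ S, v₀ (g s) = s := by
        intro s hs
        obtain ⟨a, rfl⟩ := hv₀surj s hs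
        rw [hgv₀]
      set jfun : (Fin m → Fin (m + n)) → Equiv.Perm (Fin m) := fun v =>
        if h : Function.Bijective (g ∘ v) then Equiv.ofBijective _ h else Equiv.refl _ with hjfun
      have hsum : ∑ σ : Equiv.Perm (Fin m), T S
          = ∑ v ∈ univ.filter (fun v : Fin m → Fin (m + n) => Finset.image v univ = S), Φ v := by
        refine Finset.sum_nbij' (fun σ => v₀ ∘ σ) jfun ?_ ?_ ?_ ?_ ?_
        · intro σ _
          rw [Finset.mem_filter]
          refine ⟨Finset.mem_univ _, ?_⟩
          have : Finset.image (v₀ ∘ σ) univ = Finset.image v₀ (Finset.image (⇑σ) univ) := by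
            rw [Finset.image_image]
          rw [this, Finset.image_univ_equiv, hv₀im]
        · intro v _; exact Finset.mem_univ _
        · intro σ _
          have hfuneq : g ∘ (v₀ ∘ σ) = ⇑σ := funext fun a => hgv₀ (σ a)
          have hbijσ : Function.Bijective (g ∘ (v₀ ∘ σ)) := by
            rw [hfuneq]; exact σ.bijective
          rw [hjfun]
          simp only
          rw [dif_pos hbijσ]
          exact Equiv.ext fun a => hgv₀ (σ a)
        · intro v hv
          rw [Finset.mem_filter] at hv
          have hvim : Finset.image v univ = S := hv.2
          have hvinj : Function.Injective v := by
            have : (Finset.image v univ).card = (univ : Finset (Fin m)).card := by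
              rw [hvim, hSc, Finset.card_univ, Fintype.card_fin]
            rw [Finset.card_image_iff] at this
            intro a b h
            exact this (by simp) (by simp) h
          have hvmem : ∀ a, v a ∈ S := fun a => hvim ▸ Finset.mem_image_of_mem v (Finset.mem_univ a)
          have hbij : Function.Bijective (g ∘ v) := by
            refine Finite.injective_iff_bijective.1 fun a b h => ?_
            have : v₀ (g (v a)) = v₀ (g (v b)) := congrArg v₀ h
            rw [hv₀g _ (hvmem a), hv₀g _ (hvmem b)] at this
            exact hvinj this
          rw [hjfun]
          simp only
          rw [dif_pos hbij]
          funext a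
          exact hv₀g _ (hvmem a)
        · intro σ _
          refine (htrans S (v₀ ∘ σ) (hv₀inj.comp σ.injective) ?_).symm
          have : Finset.image (v₀ ∘ σ) univ = Finset.image v₀ (Finset.image (⇑σ) univ) := by
            rw [Finset.image_image]
          rw [this, Finset.image_univ_equiv, hv₀im]
      rw [← hsum, Finset.sum_const, Finset.card_univ, Fintype.card_perm, Fintype.card_fin,
        nsmul_eq_mul]
    · rw [if_neg hSc]
      refine Finset.sum_eq_zero fun v hv => ?_
      rw [Finset.mem_filter] at hv
      have hninj : ¬ Function.Injective v := by
        intro hinj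
        apply hSc
        rw [← hv.2, Finset.card_image_of_injective _ hinj, Finset.card_univ, Fintype.card_fin]
      obtain ⟨a, b, hab, hne⟩ := Function.not_injective_iff.1 hninj
      have hmid : (∏ a', ∏ b' ∈ univ.erase a', (x (v b') - x (v a'))) = 0 := by
        refine Finset.prod_eq_zero (Finset.mem_univ a) ?_
        refine Finset.prod_eq_zero (Finset.mem_erase.2 ⟨hne.symm, Finset.mem_univ b⟩) ?_
        rw [hab, sub_self]
      rw [hΦ]
      simp only
      rw [hmid, mul_zero, zero_mul]
  -- assemble
  have step2 : (Nat.factorial m : ℂ) * ∑ S ∈ (univ : Finset (Fin (m + n))).powersetCard m, T S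
      = ∑ v : Fin m → Fin (m + n), Φ v := by
    rw [← Finset.sum_fiberwise univ (fun v : Fin m → Fin (m + n) => Finset.image v univ) Φ]
    rw [Finset.mul_sum]
    have : ∀ S : Finset (Fin (m + n)), S ∈ (univ : Finset (Finset (Fin (m + n)))) →
        (if S.card = m then (Nat.factorial m : ℂ) * T S else 0)
          = ∑ v ∈ univ.filter (fun v : Fin m → Fin (m + n) => Finset.image v univ = S), Φ v :=
      fun S _ => (hfib S).symm
    rw [← Finset.sum_congr rfl this]
    rw [← Finset.sum_filter]
    congr 1
    rw [Finset.powersetCard_eq_filter, Finset.powerset_univ]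
  have htot : ∑ v : Fin m → Fin (m + n), Φ v = 0 := total_zero p hm hp x hx
  rw [Finset.sum_congr rfl step1]
  have hfact : (Nat.factorial m : ℂ) ≠ 0 := by
    exact_mod_cast Nat.factorial_ne_zero m
  have := step2.trans htot
  exact (mul_eq_zero.1 this).resolve_left hfact

theorem stmt_10 (m n : ℕ) (hm : 1 ≤ m) (hn : 1 ≤ n) (hmn : 2 ≤ m * n)
    (x : Fin (m + n) → ℂ) (hx : Function.Injective x) :
    ∑ S ∈ Finset.univ.powersetCard m,
      (∑ α ∈ S, ∑ β ∈ Sᶜ, (x β - x α)) /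
        ∏ α ∈ S, ∏ β ∈ Sᶜ, (x β - x α) = 0 := by
  classical
  have key0 := key (m := m) (n := n) hm 0 (by omega) x hx
  have key1 := key (m := m) (n := n) hm 1 (by omega) x hx
  set T₀ : ℂ := ∑ i, x i with hT₀
  have hnum : ∀ S ∈ (univ : Finset (Fin (m + n))).powersetCard m,
      (∑ α ∈ S, ∑ β ∈ Sᶜ, (x β - x α))
        = T₀ * (∑ α ∈ S, x α ^ 0) - ((m : ℂ) + n) * (∑ α ∈ S, x α ^ 1) := by
    intro S hS
    have hcard : S.card = m := Finset.mem_powersetCard_univ.1 hS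
    have hccard : Sᶜ.card = n := by
      rw [Finset.card_compl, hcard, Fintype.card_fin]
      omega
    have hcomp : ∑ β ∈ Sᶜ, x β = T₀ - ∑ α ∈ S, x α := by
      rw [hT₀, ← Finset.sum_add_sum_compl S x]
      ring
    calc ∑ α ∈ S, ∑ β ∈ Sᶜ, (x β - x α)
        = ∑ α ∈ S, ((T₀ - ∑ α' ∈ S, x α') - (n : ℂ) * x α) := by
          refine Finset.sum_congr rfl fun α _ => ?_
          rw [Finset.sum_sub_distrib, Finset.sum_const, hccard, hcomp, nsmul_eq_mul]
      _ = (m : ℂ) * (T₀ - ∑ α ∈ S, x α) - (n : ℂ) * ∑ α ∈ S, x α := by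
          rw [Finset.sum_sub_distrib, Finset.sum_const, hcard, nsmul_eq_mul, ← Finset.mul_sum]
      _ = _ := by
          have h0 : ∑ α ∈ S, (x α : ℂ) ^ 0 = (m : ℂ) := by
            simp [hcard]
          have h1 : ∑ α ∈ S, x α ^ 1 = ∑ α ∈ S, x α := by simp
          rw [h0, h1]
          ring
  calc ∑ S ∈ (univ : Finset (Fin (m + n))).powersetCard m,
        (∑ α ∈ S, ∑ β ∈ Sᶜ, (x β - x α)) / ∏ α ∈ S, ∏ β ∈ Sᶜ, (x β - x α)
      = ∑ S ∈ (univ : Finset (Fin (m + n))).powersetCard m,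
          (T₀ * ((∑ α ∈ S, x α ^ 0) / ∏ α ∈ S, ∏ β ∈ Sᶜ, (x β - x α))
            - ((m : ℂ) + n) * ((∑ α ∈ S, x α ^ 1) / ∏ α ∈ S, ∏ β ∈ Sᶜ, (x β - x α))) := by
        refine Finset.sum_congr rfl fun S hS => ?_
        rw [hnum S hS, sub_div, mul_div_assoc, mul_div_assoc]
    _ = T₀ * (∑ S ∈ (univ : Finset (Fin (m + n))).powersetCard m,
            (∑ α ∈ S, x α ^ 0) / ∏ α ∈ S, ∏ β ∈ Sᶜ, (x β - x α))
          - ((m : ℂ) + n) * ∑ S ∈ (univ : Finset (Fin (m + n))).powersetCard m,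
            (∑ α ∈ S, x α ^ 1) / ∏ α ∈ S, ∏ β ∈ Sᶜ, (x β - x α) := by
        rw [Finset.sum_sub_distrib, Finset.mul_sum, Finset.mul_sum]
    _ = 0 := by rw [key0, key1, mul_zero, mul_zero, sub_zero]
end

section
/- Let x_1, x_2, x_3, x_4 be pairwise distinct complex numbers. Then the sum over all 2-element subsets S of {1,2,3,4} of (∑_{α∈S, β∉S}(x_β − x_α))^4 / ∏_{α∈S, β∉S}(x_β − x_α) equals 512. -/
set_option maxHeartbeats 1000000 in
private lemma key_six (a b c d : ℂ) (hba : b-a ≠ 0) (hca : c-a ≠ 0) (hda : d-a ≠ 0)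
    (hcb : c-b ≠ 0) (hdb : d-b ≠ 0) (hdc : d-c ≠ 0) :
    (c - a + (d - a) + (c - b + (d - b))) ^ 4 /
        ((c - a) * (d - a) * ((c - b) * (d - b))) +
      (b - a + (d - a) + (b - c + (d - c))) ^ 4 /
        ((b - a) * (d - a) * ((b - c) * (d - c))) +
      (b - a + (c - a) + (b - d + (c - d))) ^ 4 /
        ((b - a) * (c - a) * ((b - d) * (c - d))) +
      (a - b + (d - b) + (a - c + (d - c))) ^ 4 /
        ((a - b) * (d - b) * ((a - c) * (d - c))) +
      (a - b + (c - b) + (a - d + (c - d))) ^ 4 /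
        ((a - b) * (c - b) * ((a - d) * (c - d))) +
      (a - c + (b - c) + (a - d + (b - d))) ^ 4 /
        ((a - c) * (b - c) * ((a - d) * (b - d))) = 512 := by
  have hbc : b-c ≠ 0 := fun e => hcb (by linear_combination -e)
  have hbd : b-d ≠ 0 := fun e => hdb (by linear_combination -e)
  have hcd : c-d ≠ 0 := fun e => hdc (by linear_combination -e)
  have hab : a-b ≠ 0 := fun e => hba (by linear_combination -e)
  have hac : a-c ≠ 0 := fun e => hca (by linear_combination -e)
  have had : a-d ≠ 0 := fun e => hda (by linear_combination -e)
  set P := (b-a)*(c-a)*(d-a)*(c-b)*(d-b)*(d-c) with hPdef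
  have hP : P ≠ 0 := by
    apply mul_ne_zero; apply mul_ne_zero; apply mul_ne_zero; apply mul_ne_zero
    apply mul_ne_zero
    all_goals assumption
  have hD1 : (c-a)*(d-a)*((c-b)*(d-b)) ≠ 0 :=
    mul_ne_zero (mul_ne_zero hca hda) (mul_ne_zero hcb hdb)
  have hD2 : (b-a)*(d-a)*((b-c)*(d-c)) ≠ 0 :=
    mul_ne_zero (mul_ne_zero hba hda) (mul_ne_zero hbc hdc)
  have hD3 : (b-a)*(c-a)*((b-d)*(c-d)) ≠ 0 :=
    mul_ne_zero (mul_ne_zero hba hca) (mul_ne_zero hbd hcd)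
  have hD4 : (a-b)*(d-b)*((a-c)*(d-c)) ≠ 0 :=
    mul_ne_zero (mul_ne_zero hab hdb) (mul_ne_zero hac hdc)
  have hD5 : (a-b)*(c-b)*((a-d)*(c-d)) ≠ 0 :=
    mul_ne_zero (mul_ne_zero hab hcb) (mul_ne_zero had hcd)
  have hD6 : (a-c)*(b-c)*((a-d)*(b-d)) ≠ 0 :=
    mul_ne_zero (mul_ne_zero hac hbc) (mul_ne_zero had hbd)
  have e1 : (c - a + (d - a) + (c - b + (d - b))) ^ 4 /
        ((c - a) * (d - a) * ((c - b) * (d - b)))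
      = ((b-a)*(d-c)*(c - a + (d - a) + (c - b + (d - b))) ^ 4) / P := by
    rw [div_eq_div_iff hD1 hP, hPdef]; ring
  have e2 : (b - a + (d - a) + (b - c + (d - c))) ^ 4 /
        ((b - a) * (d - a) * ((b - c) * (d - c)))
      = (-((c-a)*(d-b))*(b - a + (d - a) + (b - c + (d - c))) ^ 4) / P := by
    rw [div_eq_div_iff hD2 hP, hPdef]; ring
  have e3 : (b - a + (c - a) + (b - d + (c - d))) ^ 4 /
        ((b - a) * (c - a) * ((b - d) * (c - d)))
      = ((d-a)*(c-b)*(b - a + (c - a) + (b - d + (c - d))) ^ 4) / P := by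
    rw [div_eq_div_iff hD3 hP, hPdef]; ring
  have e4 : (a - b + (d - b) + (a - c + (d - c))) ^ 4 /
        ((a - b) * (d - b) * ((a - c) * (d - c)))
      = ((d-a)*(c-b)*(a - b + (d - b) + (a - c + (d - c))) ^ 4) / P := by
    rw [div_eq_div_iff hD4 hP, hPdef]; ring
  have e5 : (a - b + (c - b) + (a - d + (c - d))) ^ 4 /
        ((a - b) * (c - b) * ((a - d) * (c - d)))
      = (-((c-a)*(d-b))*(a - b + (c - b) + (a - d + (c - d))) ^ 4) / P := by
    rw [div_eq_div_iff hD5 hP, hPdef]; ring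
  have e6 : (a - c + (b - c) + (a - d + (b - d))) ^ 4 /
        ((a - c) * (b - c) * ((a - d) * (b - d)))
      = ((b-a)*(d-c)*(a - c + (b - c) + (a - d + (b - d))) ^ 4) / P := by
    rw [div_eq_div_iff hD6 hP, hPdef]; ring
  rw [e1, e2, e3, e4, e5, e6, ← add_div, ← add_div,
    ← add_div, ← add_div, ← add_div, div_eq_iff hP, hPdef]
  ring

set_option maxHeartbeats 1000000 in
theorem stmt_11 (x : Fin 4 → ℂ) (hx : Function.Injective x) :
    ∑ S ∈ (Finset.univ : Finset (Fin 4)).powersetCard 2,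
      (∑ α ∈ S, ∑ β ∈ Sᶜ, (x β - x α)) ^ 4 /
        ∏ α ∈ S, ∏ β ∈ Sᶜ, (x β - x α) = 512 := by
  have h : ∀ i j : Fin 4, i ≠ j → x i - x j ≠ 0 := fun i j hij =>
    sub_ne_zero.mpr (fun e => hij (hx e))
  have hp : (Finset.univ : Finset (Fin 4)).powersetCard 2 =
      {{0,1},{0,2},{0,3},{1,2},{1,3},{2,3}} := by decide
  have hsum : ∀ f : Finset (Fin 4) → ℂ,
      ∑ S ∈ ({{0,1},{0,2},{0,3},{1,2},{1,3},{2,3}} : Finset (Finset (Fin 4))), f S =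
      f {0,1} + f {0,2} + f {0,3} + f {1,2} + f {1,3} + f {2,3} := by
    intro f
    rw [Finset.sum_insert (by decide), Finset.sum_insert (by decide),
      Finset.sum_insert (by decide), Finset.sum_insert (by decide),
      Finset.sum_insert (by decide), Finset.sum_singleton]
    ring
  rw [hp, hsum]
  have c01 : ({0,1} : Finset (Fin 4))ᶜ = {2,3} := by decide
  have c02 : ({0,2} : Finset (Fin 4))ᶜ = {1,3} := by decide
  have c03 : ({0,3} : Finset (Fin 4))ᶜ = {1,2} := by decide
  have c12 : ({1,2} : Finset (Fin 4))ᶜ = {0,3} := by decide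
  have c13 : ({1,3} : Finset (Fin 4))ᶜ = {0,2} := by decide
  have c23 : ({2,3} : Finset (Fin 4))ᶜ = {0,1} := by decide
  rw [c01, c02, c03, c12, c13, c23]
  simp only [Finset.sum_pair (by decide : (0:Fin 4) ≠ 1),
    Finset.sum_pair (by decide : (0:Fin 4) ≠ 2),
    Finset.sum_pair (by decide : (0:Fin 4) ≠ 3),
    Finset.sum_pair (by decide : (1:Fin 4) ≠ 2),
    Finset.sum_pair (by decide : (1:Fin 4) ≠ 3),
    Finset.sum_pair (by decide : (2:Fin 4) ≠ 3),
    Finset.prod_pair (by decide : (0:Fin 4) ≠ 1),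
    Finset.prod_pair (by decide : (0:Fin 4) ≠ 2),
    Finset.prod_pair (by decide : (0:Fin 4) ≠ 3),
    Finset.prod_pair (by decide : (1:Fin 4) ≠ 2),
    Finset.prod_pair (by decide : (1:Fin 4) ≠ 3),
    Finset.prod_pair (by decide : (2:Fin 4) ≠ 3)]
  exact key_six (x 0) (x 1) (x 2) (x 3)
    (h 1 0 (by decide)) (h 2 0 (by decide)) (h 3 0 (by decide))
    (h 2 1 (by decide)) (h 3 1 (by decide)) (h 3 2 (by decide))
end

section
/- Let m, n ≥ 1, set N = m + n, and let x_1, …, x_N be pairwise distinct complex numbers. Then the sum over all m-element subsets S of {1,…,N} of (∑_{α∈S, β∉S}(x_β − x_α))^{mn+1} / ∏_{α∈S, β∉S}(x_β − x_α) equals 0. -/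
open MvPolynomial Finset

namespace Stmt12

noncomputable section

variable {N : ℕ}

abbrev P (N : ℕ) := MvPolynomial (Fin N) ℂ

/-- set of ordered pairs i < j -/
def AllP (N : ℕ) : Finset (Fin N × Fin N) := univ.filter (fun p => p.1 < p.2)

def gp (p : Fin N × Fin N) : P N := X p.2 - X p.1

def Wp (S : Finset (Fin N)) : P N := ∑ α ∈ S, ∑ β ∈ Sᶜ, (X β - X α)
def Dp (S : Finset (Fin N)) : P N := ∏ α ∈ S, ∏ β ∈ Sᶜ, ((X β : P N) - X α)
def Vp (N : ℕ) : P N := ∏ p ∈ AllP N, gp p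
def Ep (S : Finset (Fin N)) : P N := ∏ p ∈ (AllP N).filter (fun p => p.1 ∈ S ↔ p.2 ∈ S), gp p
def cS (S : Finset (Fin N)) : ℕ := ((AllP N).filter (fun p => p.2 ∈ S ∧ p.1 ∉ S)).card

lemma Dp_eq_prod (S : Finset (Fin N)) :
    Dp S = ∏ p ∈ S ×ˢ Sᶜ, gp p := by
  rw [Dp, ← Finset.prod_product']
  rfl

lemma factor (S : Finset (Fin N)) :
    Ep S * Dp S = ((-1 : ℂ) ^ cS S) • Vp N := by
  classical
  -- split Dp over p.1 < p.2
  rw [Dp_eq_prod]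
  rw [← Finset.prod_filter_mul_prod_filter_not (S ×ˢ Sᶜ) (fun p => p.1 < p.2) gp]
  -- D2 = T2
  have hD2 : (S ×ˢ Sᶜ).filter (fun p => p.1 < p.2)
      = (AllP N).filter (fun p => p.1 ∈ S ∧ p.2 ∉ S) := by
    ext p
    simp [AllP, Finset.mem_filter, Finset.mem_product, and_comm, and_left_comm]
  -- D1 ↦ T1 by swap
  have hD1 : ∏ p ∈ (S ×ˢ Sᶜ).filter (fun p => ¬ p.1 < p.2), gp p
      = ∏ p ∈ (AllP N).filter (fun p => p.2 ∈ S ∧ p.1 ∉ S), gp p.swap := by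
    refine Finset.prod_nbij' Prod.swap Prod.swap ?_ ?_ ?_ ?_ ?_
    · intro p hp
      simp only [Finset.mem_filter, Finset.mem_product, AllP, Finset.mem_univ, true_and,
        Finset.mem_compl] at hp ⊢
      obtain ⟨⟨h1, h2⟩, h3⟩ := hp
      have : p.1 ≠ p.2 := fun h => h2 (h ▸ h1)
      exact ⟨lt_of_le_of_ne (not_lt.mp h3) (Ne.symm this), h1, h2⟩
    · intro p hp
      simp only [Finset.mem_filter, Finset.mem_product, AllP, Finset.mem_univ, true_and,
        Finset.mem_compl] at hp ⊢
      exact ⟨⟨hp.2.1, hp.2.2⟩, not_lt.mpr (le_of_lt hp.1)⟩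
    · intro p _; exact Prod.swap_swap p
    · intro p _; exact Prod.swap_swap p
    · intro p _; rfl
  have hswap : ∀ p : Fin N × Fin N, gp p.swap = -gp p := by
    intro p; simp only [gp, Prod.snd_swap, Prod.fst_swap]; ring
  rw [hD2, hD1]
  rw [Finset.prod_congr rfl (fun p _ => hswap p)]
  have hneg : ∏ p ∈ (AllP N).filter (fun p => p.2 ∈ S ∧ p.1 ∉ S), (-gp p)
      = (-1 : P N) ^ cS S * ∏ p ∈ (AllP N).filter (fun p => p.2 ∈ S ∧ p.1 ∉ S), gp p := by
    rw [cS]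
    rw [show (fun p : Fin N × Fin N => -gp p) = (fun p => (-1 : P N) * gp p) by funext p; ring]
    rw [Finset.prod_mul_distrib, Finset.prod_const]
  rw [hneg]
  -- now express Vp as product of the three parts
  have hV : Vp N = Ep S * ((∏ p ∈ (AllP N).filter (fun p => p.2 ∈ S ∧ p.1 ∉ S), gp p) *
      (∏ p ∈ (AllP N).filter (fun p => p.1 ∈ S ∧ p.2 ∉ S), gp p)) := by
    rw [Vp, ← Finset.prod_filter_mul_prod_filter_not (AllP N) (fun p => p.1 ∈ S ↔ p.2 ∈ S) gp]
    rw [← Finset.prod_filter_mul_prod_filter_not ((AllP N).filter (fun p => ¬(p.1 ∈ S ↔ p.2 ∈ S)))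
      (fun p => p.2 ∈ S) gp]
    rw [Finset.filter_filter, Finset.filter_filter]
    congr 2
    · refine Finset.prod_congr (Finset.filter_congr ?_) fun _ _ => rfl
      intro p _; constructor
      · rintro ⟨h1, h2⟩; exact ⟨h2, fun hp1 => h1 (iff_of_true hp1 h2)⟩
      · rintro ⟨h1, h2⟩; exact ⟨fun h => h2 (h.mpr h1), h1⟩
    · refine Finset.prod_congr (Finset.filter_congr ?_) fun _ _ => rfl
      intro p _; constructor
      · rintro ⟨h1, h2⟩
        rcases Decidable.em (p.1 ∈ S) with h3 | h3
        · exact ⟨h3, h2⟩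
        · exact absurd (iff_of_false h3 h2) h1
      · rintro ⟨h1, h2⟩; exact ⟨fun h => h2 (h.mp h1), h2⟩
  rw [MvPolynomial.smul_eq_C_mul, hV]
  rw [map_pow, map_neg, map_one]
  ring

-- chunk 2 --

lemma prod_AllP_eq_det {R : Type*} [CommRing R] (v : Fin N → R) :
    ∏ p ∈ AllP N, (v p.2 - v p.1) = (Matrix.vandermonde v).det := by
  rw [Matrix.det_vandermonde, AllP]
  rw [show (univ : Finset (Fin N × Fin N)) = univ ×ˢ univ from rfl]
  rw [Finset.prod_filter]
  rw [Finset.prod_product' (f := fun i j => if i < j then v j - v i else 1)]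
  refine Finset.prod_congr rfl fun i _ => ?_
  rw [← Finset.prod_filter]
  congr 1
  ext j
  simp [Finset.mem_Ioi]

lemma Vp_eq_det : Vp N = (Matrix.vandermonde (fun i => (X i : P N))).det := by
  rw [Vp, ← prod_AllP_eq_det]
  rfl

lemma compl_image (τ : Equiv.Perm (Fin N)) (S : Finset (Fin N)) :
    (S.image τ)ᶜ = Sᶜ.image τ := by
  ext b
  simp only [Finset.mem_compl, Finset.mem_image]
  constructor
  · intro h
    exact ⟨τ.symm b, fun hb => h ⟨τ.symm b, hb, τ.apply_symm_apply b⟩, τ.apply_symm_apply b⟩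
  · rintro ⟨a, ha, rfl⟩ ⟨a', ha', haa⟩
    exact ha (τ.injective haa ▸ ha')

lemma rename_Wp (τ : Equiv.Perm (Fin N)) (S : Finset (Fin N)) :
    rename τ (Wp S) = Wp (S.image τ) := by
  rw [Wp, map_sum, Wp]
  rw [Finset.sum_image (fun a _ b _ h => τ.injective h)]
  refine Finset.sum_congr rfl fun α _ => ?_
  rw [map_sum, compl_image, Finset.sum_image (fun a _ b _ h => τ.injective h)]
  refine Finset.sum_congr rfl fun β _ => ?_
  rw [map_sub, rename_X, rename_X]

lemma rename_Dp (τ : Equiv.Perm (Fin N)) (S : Finset (Fin N)) :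
    rename τ (Dp S) = Dp (S.image τ) := by
  rw [Dp, map_prod, Dp]
  rw [Finset.prod_image (fun a _ b _ h => τ.injective h)]
  refine Finset.prod_congr rfl fun α _ => ?_
  rw [map_prod, compl_image, Finset.prod_image (fun a _ b _ h => τ.injective h)]
  refine Finset.prod_congr rfl fun β _ => ?_
  rw [map_sub, rename_X, rename_X]

lemma rename_swap_Vp {i j : Fin N} (hij : i ≠ j) :
    rename (Equiv.swap i j) (Vp N) = -Vp N := by
  have h1 : rename (Equiv.swap i j) (Vp N)
      = ∏ p ∈ AllP N, ((X (Equiv.swap i j p.2) : P N) - X (Equiv.swap i j p.1)) := by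
    rw [Vp, map_prod]
    exact Finset.prod_congr rfl fun p _ => by rw [gp, map_sub, rename_X, rename_X]
  rw [h1, prod_AllP_eq_det (v := fun k => X (Equiv.swap i j k))]
  have h2 : Matrix.vandermonde (fun k => (X (Equiv.swap i j k) : P N))
      = (Matrix.vandermonde (fun k => (X k : P N))).submatrix (Equiv.swap i j) id := by
    ext a b
    simp [Matrix.vandermonde_apply, Matrix.submatrix_apply]
  rw [h2, Matrix.det_permute, Equiv.Perm.sign_swap hij, Vp_eq_det]
  push_cast
  ring

def sE (S : Finset (Fin N)) : P N := ((-1 : ℂ) ^ cS S) • Ep S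

lemma sE_mul_Dp (S : Finset (Fin N)) : sE S * Dp S = Vp N := by
  rw [sE, smul_mul_assoc, factor, smul_smul, ← pow_add, ← two_mul, pow_mul]
  norm_num

lemma Dp_ne_zero (S : Finset (Fin N)) : Dp S ≠ 0 := by
  rw [Dp]
  rw [Finset.prod_ne_zero_iff]
  intro α hα
  rw [Finset.prod_ne_zero_iff]
  intro β hβ
  rw [Finset.mem_compl] at hβ
  have : α ≠ β := fun h => hβ (h ▸ hα)
  intro h
  rw [sub_eq_zero] at h
  exact this (MvPolynomial.X_injective h).symm

lemma rename_sE {i j : Fin N} (hij : i ≠ j) (S : Finset (Fin N)) :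
    rename (Equiv.swap i j) (sE S) = -sE (S.image (Equiv.swap i j)) := by
  have h1 : rename (Equiv.swap i j) (sE S * Dp S)
      = -(sE (S.image (Equiv.swap i j)) * Dp (S.image (Equiv.swap i j))) := by
    rw [sE_mul_Dp, sE_mul_Dp, rename_swap_Vp hij]
  rw [map_mul, rename_Dp, ← neg_mul] at h1
  exact mul_right_cancel₀ (Dp_ne_zero _) h1

-- chunk 3 --

def Ap (N m k : ℕ) : P N := ∑ S ∈ (univ : Finset (Fin N)).powersetCard m, sE S * Wp S ^ k

lemma rename_swap_Ap {i j : Fin N} (hij : i ≠ j) (m k : ℕ) :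
    rename (Equiv.swap i j) (Ap N m k) = -Ap N m k := by
  rw [Ap, map_sum]
  have h1 : ∀ S ∈ (univ : Finset (Fin N)).powersetCard m,
      rename (Equiv.swap i j) (sE S * Wp S ^ k)
        = -(sE (S.image (Equiv.swap i j)) * Wp (S.image (Equiv.swap i j)) ^ k) := by
    intro S _
    rw [map_mul, map_pow, rename_sE hij, rename_Wp, neg_mul]
  rw [Finset.sum_congr rfl h1, Finset.sum_neg_distrib, neg_inj]
  refine Finset.sum_nbij' (fun S => S.image (Equiv.swap i j)) (fun S => S.image (Equiv.swap i j))
    ?_ ?_ ?_ ?_ ?_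
  · intro S hS
    rw [Finset.mem_powersetCard_univ] at hS ⊢
    rw [Finset.card_image_of_injective _ (Equiv.injective _), hS]
  · intro S hS
    rw [Finset.mem_powersetCard_univ] at hS ⊢
    rw [Finset.card_image_of_injective _ (Equiv.injective _), hS]
  · intro S _
    show Finset.image _ (Finset.image _ S) = S
    rw [Finset.image_image]
    have : (Equiv.swap i j : Fin N → Fin N) ∘ (Equiv.swap i j) = id := by
      funext a; simp
    rw [this, Finset.image_id]
  · intro S _
    show Finset.image _ (Finset.image _ S) = S
    rw [Finset.image_image]
    have : (Equiv.swap i j : Fin N → Fin N) ∘ (Equiv.swap i j) = id := by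
      funext a; simp
    rw [this, Finset.image_id]
  · intro S _; rfl

lemma alternating_coeff {p : P N} {i j : Fin N} (hij : i ≠ j)
    (hp : rename (Equiv.swap i j) p = -p) (μ : Fin N →₀ ℕ) (hμ : μ i = μ j) :
    coeff μ p = 0 := by
  have hmd : Finsupp.mapDomain (Equiv.swap i j) μ = μ := by
    rw [← Finsupp.equivMapDomain_eq_mapDomain]
    ext a
    simp only [Finsupp.equivMapDomain_apply, Equiv.symm_swap]
    rcases eq_or_ne a i with rfl | hai
    · rw [Equiv.swap_apply_left, hμ]
    rcases eq_or_ne a j with rfl | haj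
    · rw [Equiv.swap_apply_right, hμ]
    · rw [Equiv.swap_apply_of_ne_of_ne hai haj]
  have h2 := MvPolynomial.coeff_rename_mapDomain (⇑(Equiv.swap i j)) (Equiv.injective _) p μ
  rw [hmd, hp, MvPolynomial.coeff_neg] at h2
  linear_combination (-1/2 : ℂ) * h2

-- cardinality lemmas

lemma card_D1 (S : Finset (Fin N)) :
    ((S ×ˢ Sᶜ).filter (fun p => ¬ p.1 < p.2)).card = cS S := by
  rw [cS]
  refine Finset.card_nbij' Prod.swap Prod.swap ?_ ?_ ?_ ?_
  · intro p hp
    simp only [Finset.mem_coe, Finset.mem_filter, Finset.mem_product, AllP, Finset.mem_univ, true_and,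
      Finset.mem_compl] at hp ⊢
    obtain ⟨⟨h1, h2⟩, h3⟩ := hp
    have : p.1 ≠ p.2 := fun h => h2 (h ▸ h1)
    exact ⟨lt_of_le_of_ne (not_lt.mp h3) (Ne.symm this), h1, h2⟩
  · intro p hp
    simp only [Finset.mem_coe, Finset.mem_filter, Finset.mem_product, AllP, Finset.mem_univ, true_and,
      Finset.mem_compl] at hp ⊢
    exact ⟨⟨hp.2.1, hp.2.2⟩, not_lt.mpr (le_of_lt hp.1)⟩
  · intro p _; exact Prod.swap_swap p
  · intro p _; exact Prod.swap_swap p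

lemma hD2set (S : Finset (Fin N)) : (S ×ˢ Sᶜ).filter (fun p => p.1 < p.2)
    = (AllP N).filter (fun p => p.1 ∈ S ∧ p.2 ∉ S) := by
  ext p
  simp [AllP, Finset.mem_filter, Finset.mem_product, and_comm, and_left_comm]

lemma T1set (S : Finset (Fin N)) :
    ((AllP N).filter (fun p => ¬(p.1 ∈ S ↔ p.2 ∈ S))).filter (fun p => p.2 ∈ S)
      = (AllP N).filter (fun p => p.2 ∈ S ∧ p.1 ∉ S) := by
  rw [Finset.filter_filter]
  apply Finset.filter_congr
  intro p _; constructor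
  · rintro ⟨h1, h2⟩; exact ⟨h2, fun hp1 => h1 (iff_of_true hp1 h2)⟩
  · rintro ⟨h1, h2⟩; exact ⟨fun h => h2 (h.mpr h1), h1⟩

lemma T2set (S : Finset (Fin N)) :
    ((AllP N).filter (fun p => ¬(p.1 ∈ S ↔ p.2 ∈ S))).filter (fun p => ¬ p.2 ∈ S)
      = (AllP N).filter (fun p => p.1 ∈ S ∧ p.2 ∉ S) := by
  rw [Finset.filter_filter]
  apply Finset.filter_congr
  intro p _; constructor
  · rintro ⟨h1, h2⟩
    rcases Decidable.em (p.1 ∈ S) with h3 | h3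
    · exact ⟨h3, h2⟩
    · exact absurd (iff_of_false h3 h2) h1
  · rintro ⟨h1, h2⟩; exact ⟨fun h => h2 (h.mp h1), h2⟩

lemma Ep_card_add (S : Finset (Fin N)) :
    ((AllP N).filter (fun p => p.1 ∈ S ↔ p.2 ∈ S)).card + (S ×ˢ Sᶜ).card = (AllP N).card := by
  have h1 := Finset.card_filter_add_card_filter_not
    (s := AllP N) (fun p : Fin N × Fin N => p.1 ∈ S ↔ p.2 ∈ S)
  have h2 := Finset.card_filter_add_card_filter_not
    (s := (AllP N).filter (fun p => ¬(p.1 ∈ S ↔ p.2 ∈ S))) (fun p : Fin N × Fin N => p.2 ∈ S)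
  have h3 := Finset.card_filter_add_card_filter_not
    (s := S ×ˢ Sᶜ) (fun p : Fin N × Fin N => p.1 < p.2)
  rw [T1set, T2set] at h2
  rw [hD2set, card_D1] at h3
  have hc : cS S = ((AllP N).filter (fun p => p.2 ∈ S ∧ p.1 ∉ S)).card := rfl
  omega

-- chunk 4: homogeneity --

lemma Wp_homog (S : Finset (Fin N)) : (Wp S).IsHomogeneous 1 :=
  MvPolynomial.IsHomogeneous.sum _ _ _ fun α _ =>
    MvPolynomial.IsHomogeneous.sum _ _ _ fun β _ =>
      (isHomogeneous_X ℂ β).sub (isHomogeneous_X ℂ α)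

lemma Ep_homog (S : Finset (Fin N)) :
    (Ep S).IsHomogeneous ((AllP N).filter (fun p => p.1 ∈ S ↔ p.2 ∈ S)).card := by
  have h := MvPolynomial.IsHomogeneous.prod ((AllP N).filter (fun p => p.1 ∈ S ↔ p.2 ∈ S))
    gp (fun _ => 1) (fun p _ => (isHomogeneous_X ℂ p.2).sub (isHomogeneous_X ℂ p.1))
  simpa [Ep] using h

lemma sE_homog (S : Finset (Fin N)) :
    (sE S).IsHomogeneous ((AllP N).filter (fun p => p.1 ∈ S ↔ p.2 ∈ S)).card := by
  rw [sE, MvPolynomial.smul_eq_C_mul]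
  have h := (isHomogeneous_C (Fin N) ((-1 : ℂ) ^ cS S)).mul (Ep_homog S)
  simpa using h

lemma Ap_homog (m n : ℕ) : (Ap (m+n) m (m*n+1)).IsHomogeneous ((AllP (m+n)).card + 1) := by
  apply MvPolynomial.IsHomogeneous.sum
  intro S hS
  rw [Finset.mem_powersetCard_univ] at hS
  have hcompl : (Sᶜ : Finset (Fin (m+n))).card = n := by
    rw [Finset.card_compl, Fintype.card_fin, hS]; omega
  have hprod : (S ×ˢ Sᶜ).card = m * n := by rw [Finset.card_product, hS, hcompl]
  have hE := Ep_card_add S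
  rw [hprod] at hE
  have hdeg : (AllP (m+n)).card + 1
      = ((AllP (m+n)).filter (fun p => p.1 ∈ S ↔ p.2 ∈ S)).card + 1 * (m*n+1) := by omega
  rw [hdeg]
  exact (sE_homog S).mul ((Wp_homog S).pow _)

lemma card_AllP : (AllP N).card = ∑ k ∈ Finset.range N, k := by
  rw [AllP, show (univ : Finset (Fin N × Fin N)) = univ ×ˢ univ from rfl]
  rw [Finset.card_filter]
  rw [Finset.sum_product' (f := fun i j => if i < j then 1 else 0)]
  have h1 : ∀ i : Fin N, (∑ j : Fin N, if i < j then 1 else 0) = N - 1 - (i : ℕ) := by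
    intro i
    rw [← Finset.card_filter]
    have : univ.filter (fun j => i < j) = Finset.Ioi i := by
      ext j; simp [Finset.mem_Ioi]
    rw [this, Fin.card_Ioi]
  rw [Finset.sum_congr rfl (fun i _ => h1 i)]
  rw [Fin.sum_univ_eq_sum_range (fun k => N - 1 - k) N]
  exact Finset.sum_range_reflect id N

-- chunk 5: nat classification --

lemma sum_card_le (c : ℕ) : ∀ s : Finset ℕ, s.card = c →
    ∑ k ∈ Finset.range c, k ≤ ∑ a ∈ s, a := by
  induction c with
  | zero => intro s _; simp
  | succ c ih =>
    intro s hs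
    have hne : s.Nonempty := Finset.card_pos.mp (by omega)
    set M := s.max' hne with hM
    have hMs : M ∈ s := s.max'_mem hne
    have hMge : c ≤ M := by
      have hsub : s ⊆ Finset.range (M + 1) := fun a ha =>
        Finset.mem_range.mpr (Nat.lt_succ_of_le (s.le_max' a ha))
      have := Finset.card_le_card hsub
      rw [Finset.card_range] at this
      omega
    have hcard : (s.erase M).card = c := by
      rw [Finset.card_erase_of_mem hMs, hs]
      omega
    have hih := ih (s.erase M) hcard
    have hsum := Finset.sum_erase_add s id hMs
    rw [Finset.sum_range_succ]
    simp only [id] at hsum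
    omega

lemma sum_card_eq (c : ℕ) : ∀ s : Finset ℕ, s.card = c →
    ∑ a ∈ s, a = ∑ k ∈ Finset.range c, k → s = Finset.range c := by
  induction c with
  | zero => intro s hs _; rw [Finset.card_eq_zero] at hs; simp [hs]
  | succ c ih =>
    intro s hs hsum
    have hne : s.Nonempty := Finset.card_pos.mp (by omega)
    set M := s.max' hne with hM
    have hMs : M ∈ s := s.max'_mem hne
    have hMge : c ≤ M := by
      have hsub : s ⊆ Finset.range (M + 1) := fun a ha =>
        Finset.mem_range.mpr (Nat.lt_succ_of_le (s.le_max' a ha))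
      have := Finset.card_le_card hsub
      rw [Finset.card_range] at this
      omega
    have hcard : (s.erase M).card = c := by
      rw [Finset.card_erase_of_mem hMs, hs]
      omega
    have hle := sum_card_le c (s.erase M) hcard
    have hsum2 := Finset.sum_erase_add s id hMs
    simp only [id] at hsum2
    rw [Finset.sum_range_succ] at hsum
    have hMc : M = c := by omega
    have herase : s.erase M = Finset.range c := by
      apply ih (s.erase M) hcard
      omega
    rw [← Finset.insert_erase hMs, herase, hMc, Finset.range_add_one]

lemma classify (c : ℕ) (s : Finset ℕ) (hcard : s.card = c)
    (hsum : ∑ a ∈ s, a = (∑ k ∈ Finset.range c, k) + 1) :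
    s = insert c (Finset.range (c - 1)) := by
  rcases Nat.eq_zero_or_pos c with rfl | hc
  · rw [Finset.card_eq_zero] at hcard; rw [hcard] at hsum; simp at hsum
  have hne : s.Nonempty := Finset.card_pos.mp (by omega)
  set M := s.max' hne with hM
  have hMs : M ∈ s := s.max'_mem hne
  have hMge : c - 1 ≤ M := by
    have hsub : s ⊆ Finset.range (M + 1) := fun a ha =>
      Finset.mem_range.mpr (Nat.lt_succ_of_le (s.le_max' a ha))
    have := Finset.card_le_card hsub
    rw [Finset.card_range] at this
    omega
  have hcard2 : (s.erase M).card = c - 1 := by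
    rw [Finset.card_erase_of_mem hMs, hcard]
  have hle := sum_card_le (c - 1) (s.erase M) hcard2
  have hsum2 := Finset.sum_erase_add s id hMs
  simp only [id] at hsum2
  -- ∑ range c = ∑ range (c-1) + (c-1)
  have hrange : ∑ k ∈ Finset.range c, k = (∑ k ∈ Finset.range (c-1), k) + (c - 1) := by
    conv_lhs => rw [show c = (c-1) + 1 by omega]
    rw [Finset.sum_range_succ]
  -- bound M above
  have hMub : M ≤ c := by
    by_contra hcon
    push_neg at hcon
    -- M ≥ c + 1 : sum too big
    omega
  have hMc : M = c := by
    rcases Nat.lt_or_ge M c with hlt | hge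
    · -- M = c - 1, so s ⊆ range c, s = range c, contradiction with sum
      exfalso
      have hMeq : M = c - 1 := by omega
      have hsub : s ⊆ Finset.range c := fun a ha =>
        Finset.mem_range.mpr (by have := s.le_max' a ha; omega)
      have := Finset.eq_of_subset_of_card_le hsub (by rw [Finset.card_range, hcard])
      rw [this] at hsum
      omega
    · omega
  have herase : s.erase M = Finset.range (c - 1) := by
    apply sum_card_eq (c - 1) (s.erase M) hcard2
    omega
  rw [← Finset.insert_erase hMs, herase, hMc]

-- chunk 6: derivative machinery --

lemma coeff_pderiv (p : P N) (i : Fin N) (ν : Fin N →₀ ℕ) :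
    coeff ν (pderiv i p) = ((ν i : ℂ) + 1) * coeff (ν + Finsupp.single i 1) p := by
  induction p using MvPolynomial.induction_on' with
  | add p q hp hq => rw [map_add, coeff_add, coeff_add, hp, hq]; ring
  | monomial d a =>
    rw [pderiv_monomial, coeff_monomial, coeff_monomial]
    by_cases hd : d = ν + Finsupp.single i 1
    · have h1 : d - Finsupp.single i 1 = ν := by
        subst hd; ext a; simp [Finsupp.sub_apply, Finsupp.add_apply]
      have h2 : d i = ν i + 1 := by subst hd; simp
      rw [if_pos h1, if_pos hd, h2]
      push_cast
      ring
    · rw [if_neg hd]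
      by_cases h0 : d i = 0
      · by_cases h1 : d - Finsupp.single i 1 = ν
        · rw [if_pos h1, h0]
          push_cast
          ring
        · rw [if_neg h1, mul_zero]
      · have h1 : d - Finsupp.single i 1 ≠ ν := by
          intro hcon
          apply hd
          rw [← hcon]
          ext a
          rcases eq_or_ne a i with rfl | ha
          · simp [Finsupp.sub_apply, Finsupp.add_apply]
            omega
          · simp [Finsupp.sub_apply, Finsupp.add_apply, Finsupp.single_apply, ha.symm]
        rw [if_neg h1, mul_zero]

def Der (q : P N) : P N := ∑ i, pderiv i q

lemma Der_add (a b : P N) : Der (a + b) = Der a + Der b := by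
  simp [Der, map_add, Finset.sum_add_distrib]

lemma Der_mul (a b : P N) : Der (a * b) = Der a * b + a * Der b := by
  simp only [Der, pderiv_mul]
  rw [Finset.sum_add_distrib, Finset.sum_mul, Finset.mul_sum]

lemma Der_C (a : ℂ) : Der (C a : P N) = 0 := by simp [Der, pderiv_C]

lemma Der_one : Der (1 : P N) = 0 := by
  rw [show (1 : P N) = C 1 by simp]; exact Der_C 1

lemma Der_X (j : Fin N) : Der (X j : P N) = 1 := by
  simp [Der, pderiv_X, Pi.single_apply]

lemma Der_gp (p : Fin N × Fin N) : Der (gp p) = 0 := by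
  rw [gp, sub_eq_add_neg, Der_add, show (-X p.1 : P N) = C (-1) * X p.1 by simp, Der_mul,
    Der_C, Der_X, Der_X]
  simp

lemma Der_prod_gp (s : Finset (Fin N × Fin N)) : Der (∏ p ∈ s, gp p) = 0 := by
  refine Finset.prod_induction gp (fun q => Der q = 0) ?_ Der_one (fun p _ => Der_gp p)
  intro a b ha hb
  rw [Der_mul, ha, hb]
  ring

lemma Der_sum {ι : Type*} (s : Finset ι) (f : ι → P N) (h : ∀ i ∈ s, Der (f i) = 0) :
    Der (∑ i ∈ s, f i) = 0 := by
  classical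
  induction s using Finset.induction_on with
  | empty => simp [Der]
  | @insert a s ha ih =>
    rw [Finset.sum_insert ha, Der_add, h a (Finset.mem_insert_self a s),
      ih (fun i hi => h i (Finset.mem_insert_of_mem hi))]
    simp

lemma Der_Wp (S : Finset (Fin N)) : Der (Wp S) = 0 :=
  Der_sum _ _ fun α _ => Der_sum _ _ fun β _ => Der_gp (α, β)

lemma Der_pow (q : P N) (hq : Der q = 0) (k : ℕ) : Der (q ^ k) = 0 := by
  induction k with
  | zero => simpa using Der_one
  | succ k ih => rw [pow_succ, Der_mul, ih, hq]; ring

lemma Der_sE (S : Finset (Fin N)) : Der (sE S) = 0 := by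
  rw [sE, MvPolynomial.smul_eq_C_mul, Der_mul, Der_C, Ep, Der_prod_gp]
  ring

lemma Der_Ap (m k : ℕ) : Der (Ap N m k) = 0 := by
  rw [Ap]
  refine Der_sum _ _ fun S _ => ?_
  rw [Der_mul, Der_sE, Der_pow _ (Der_Wp S)]
  ring

-- chunk 7: main vanishing --

theorem Ap_zero (m n : ℕ) : Ap (m+n) m (m*n+1) = 0 := by
  apply MvPolynomial.ext
  intro μ
  rw [MvPolynomial.coeff_zero]
  by_contra h0
  have hAlt : ∀ (i j : Fin (m+n)), i ≠ j → ∀ (d : Fin (m+n) →₀ ℕ), d i = d j →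
      coeff d (Ap (m+n) m (m*n+1)) = 0 :=
    fun i j hij d hd => alternating_coeff hij (rename_swap_Ap hij m _) d hd
  have hinj : Function.Injective (fun a : Fin (m+n) => μ a) := by
    intro a b hab
    by_contra hne
    exact h0 (hAlt a b hne μ hab)
  have hdeg : μ.degree = (AllP (m+n)).card + 1 := by
    by_contra hne
    exact h0 ((Ap_homog m n).coeff_eq_zero hne)
  have hdeg' : ∑ a : Fin (m+n), μ a = (∑ k ∈ Finset.range (m+n), k) + 1 := by
    rw [← card_AllP, ← hdeg, Finsupp.degree]
    exact (Finset.sum_subset (Finset.subset_univ _)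
      (fun a _ ha => Finsupp.notMem_support_iff.mp ha)).symm
  set s : Finset ℕ := univ.image (fun a => μ a) with hs
  have hscard : s.card = m + n := by
    rw [hs, Finset.card_image_of_injective _ hinj, Finset.card_univ, Fintype.card_fin]
  have hssum : ∑ a ∈ s, a = (∑ k ∈ Finset.range (m+n), k) + 1 := by
    rw [hs, Finset.sum_image (fun a _ b _ hab => hinj hab)]
    exact hdeg'
  have hclass := classify (m+n) s hscard hssum
  have hmem : (m+n) ∈ s := by rw [hclass]; exact Finset.mem_insert_self _ _
  obtain ⟨i, -, hi⟩ := Finset.mem_image.mp hmem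
  have hother : ∀ j, j ≠ i → μ j < m + n - 1 := by
    intro j hj
    have hjs : μ j ∈ s := Finset.mem_image_of_mem _ (Finset.mem_univ j)
    rw [hclass, Finset.mem_insert] at hjs
    rcases hjs with h | h
    · exact absurd (hinj (show μ j = μ i from h.trans hi.symm)) hj
    · exact Finset.mem_range.mp h
  set ν : Fin (m+n) →₀ ℕ := μ - Finsupp.single i 1 with hν
  have hνi : ν i = m + n - 1 := by
    rw [hν]
    simp [Finsupp.sub_apply, hi]
  have hνj : ∀ j, j ≠ i → ν j = μ j := by
    intro j hj
    rw [hν]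
    simp [Finsupp.sub_apply, Finsupp.single_apply, Ne.symm hj]
  have hμν : ν + Finsupp.single i 1 = μ := by
    ext a
    rcases eq_or_ne a i with rfl | ha
    · simp only [Finsupp.add_apply, Finsupp.single_eq_same, hνi]
      have h1n : (a : ℕ) < m + n := a.isLt
      omega
    · simp [Finsupp.add_apply, Finsupp.single_apply, Ne.symm ha, hνj a ha]
  have hνinj : Function.Injective (fun a : Fin (m+n) => ν a) := by
    intro a b hab
    simp only at hab
    rcases eq_or_ne a i with rfl | ha
    · rcases eq_or_ne b a with rfl | hb
      · rfl
      · exfalso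
        have h1 := hother b (fun h => hb h)
        rw [hνi, hνj b (fun h => hb h)] at hab
        omega
    · rcases eq_or_ne b i with rfl | hb
      · exfalso
        have h1 := hother a ha
        rw [hνi, hνj a ha] at hab
        omega
      · have : μ a = μ b := by rw [← hνj a ha, ← hνj b hb]; exact hab
        exact hinj this
  have hνim : univ.image (fun a : Fin (m+n) => ν a) = Finset.range (m+n) := by
    apply Finset.eq_of_subset_of_card_le
    · intro v hv
      obtain ⟨a, -, rfl⟩ := Finset.mem_image.mp hv
      rw [Finset.mem_range]
      rcases eq_or_ne a i with rfl | ha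
      · rw [hνi]
        have h1n : (a : ℕ) < m + n := a.isLt
        omega
      · have := hother a ha
        rw [hνj a ha]
        omega
    · rw [Finset.card_range, Finset.card_image_of_injective _ hνinj, Finset.card_univ,
        Fintype.card_fin]
  have hDercoeff : (0:ℂ) = ∑ j : Fin (m+n),
      ((ν j : ℂ) + 1) * coeff (ν + Finsupp.single j 1) (Ap (m+n) m (m*n+1)) := by
    have h1 : coeff ν (Der (Ap (m+n) m (m*n+1))) = ∑ j : Fin (m+n),
        ((ν j : ℂ) + 1) * coeff (ν + Finsupp.single j 1) (Ap (m+n) m (m*n+1)) := by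
      rw [Der, MvPolynomial.coeff_sum]
      exact Finset.sum_congr rfl fun j _ => coeff_pderiv _ j ν
    rw [Der_Ap, MvPolynomial.coeff_zero] at h1
    exact h1
  have hterm : ∀ j, j ≠ i → coeff (ν + Finsupp.single j 1) (Ap (m+n) m (m*n+1)) = 0 := by
    intro j hj
    have hv : ν j + 1 ∈ Finset.range (m+n) := by
      rw [Finset.mem_range]
      have := hother j hj
      rw [hνj j hj]
      omega
    rw [← hνim] at hv
    obtain ⟨k, -, hk⟩ := Finset.mem_image.mp hv
    have hkj : k ≠ j := by
      intro h
      rw [h] at hk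
      omega
    apply hAlt k j hkj
    have h1 : ((ν + Finsupp.single j 1 : Fin (m+n) →₀ ℕ)) k = ν k := by
      simp [Finsupp.add_apply, Finsupp.single_apply, Ne.symm hkj]
    have h2 : ((ν + Finsupp.single j 1 : Fin (m+n) →₀ ℕ)) j = ν j + 1 := by
      simp [Finsupp.add_apply, Finsupp.single_eq_same]
    rw [h1, h2, hk]
  rw [Finset.sum_eq_single i (fun j _ hj => by rw [hterm j hj, mul_zero])
    (fun h => absurd (Finset.mem_univ i) h)] at hDercoeff
  rw [hμν, hνi] at hDercoeff
  have hcast : ((m+n-1 : ℕ) : ℂ) + 1 = ((m+n-1+1 : ℕ) : ℂ) := by push_cast; ring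
  rw [hcast] at hDercoeff
  have hne : ((m+n-1+1 : ℕ) : ℂ) ≠ 0 := Nat.cast_ne_zero.mpr (by omega)
  rcases mul_eq_zero.mp hDercoeff.symm with h | h
  · exact hne h
  · exact h0 h

-- chunk 8: evaluation --

theorem main (m n : ℕ) (hm : 1 ≤ m) (hn : 1 ≤ n) (x : Fin (m + n) → ℂ)
    (hx : Function.Injective x) :
    ∑ S ∈ Finset.univ.powersetCard m,
      (∑ α ∈ S, ∑ β ∈ Sᶜ, (x β - x α)) ^ (m * n + 1) /
        ∏ α ∈ S, ∏ β ∈ Sᶜ, (x β - x α) = 0 := by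
  classical
  have hV : (eval x) (Vp (m+n)) ≠ 0 := by
    rw [Vp, map_prod, Finset.prod_ne_zero_iff]
    intro p hp
    rw [gp, map_sub, eval_X, eval_X, sub_ne_zero]
    intro h
    have h2 : p.2 = p.1 := hx h
    rw [AllP, Finset.mem_filter] at hp
    have := hp.2
    rw [h2] at this
    exact lt_irrefl _ this
  have hD : ∀ S : Finset (Fin (m+n)), (eval x) (Dp S) ≠ 0 := by
    intro S
    rw [Dp, map_prod, Finset.prod_ne_zero_iff]
    intro α hα
    rw [map_prod, Finset.prod_ne_zero_iff]
    intro β hβ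
    rw [map_sub, eval_X, eval_X, sub_ne_zero]
    intro h
    rw [Finset.mem_compl] at hβ
    exact hβ ((hx h) ▸ hα)
  have hkey : ∀ S : Finset (Fin (m+n)),
      (eval x) (sE S) * (eval x) (Dp S) = (eval x) (Vp (m+n)) := by
    intro S
    rw [← map_mul, sE_mul_Dp]
  have hterm : ∀ S : Finset (Fin (m+n)),
      (∑ α ∈ S, ∑ β ∈ Sᶜ, (x β - x α)) ^ (m * n + 1) / (∏ α ∈ S, ∏ β ∈ Sᶜ, (x β - x α))
        = (eval x) (sE S * Wp S ^ (m*n+1)) / (eval x) (Vp (m+n)) := by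
    intro S
    have hW : (eval x) (Wp S) = ∑ α ∈ S, ∑ β ∈ Sᶜ, (x β - x α) := by
      rw [Wp, map_sum]
      refine Finset.sum_congr rfl fun α _ => ?_
      rw [map_sum]
      refine Finset.sum_congr rfl fun β _ => ?_
      rw [map_sub, eval_X, eval_X]
    have hDe : (eval x) (Dp S) = ∏ α ∈ S, ∏ β ∈ Sᶜ, (x β - x α) := by
      rw [Dp, map_prod]
      refine Finset.prod_congr rfl fun α _ => ?_
      rw [map_prod]
      refine Finset.prod_congr rfl fun β _ => ?_
      rw [map_sub, eval_X, eval_X]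
    rw [← hW, ← hDe, map_mul, map_pow]
    rw [div_eq_div_iff (hD S) hV]
    rw [← hkey S]
    ring
  rw [Finset.sum_congr rfl (fun S _ => hterm S), ← Finset.sum_div]
  rw [show ∑ S ∈ Finset.univ.powersetCard m, (eval x) (sE S * Wp S ^ (m*n+1))
      = (eval x) (Ap (m+n) m (m*n+1)) by rw [Ap, map_sum]]
  rw [Ap_zero m n, map_zero, zero_div]

end

end Stmt12

theorem stmt_12 (m n : ℕ) (hm : 1 ≤ m) (hn : 1 ≤ n) (x : Fin (m + n) → ℂ)
    (hx : Function.Injective x) :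
    ∑ S ∈ Finset.univ.powersetCard m,
      (∑ α ∈ S, ∑ β ∈ Sᶜ, (x β - x α)) ^ (m * n + 1) /
        ∏ α ∈ S, ∏ β ∈ Sᶜ, (x β - x α) = 0 :=
  Stmt12.main m n hm hn x hx
end

section
/- Let x, y, z, w be pairwise distinct complex numbers. Then the sum over all 2-element subsets S of {1,2,3,4}, with weight multiset W_S = {x_β − x_α : α ∈ S, β ∉ S} (where (x_1,x_2,x_3,x_4) = (x,y,z,w)), of e_2(W_S)/∏_{v∈W_S} v equals 0, where e_2 denotes the second elementary symmetric polynomial in the four elements of W_S. -/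
lemma esymm2' (a b c d : ℂ) : (a ::ₘ b ::ₘ c ::ₘ ({d} : Multiset ℂ)).esymm 2
    = a*b+a*c+a*d+b*c+b*d+c*d := by
  simp [Multiset.esymm, Multiset.powersetCard_cons,
    Multiset.powersetCard_zero_left, Multiset.powersetCard_one]
  ring

lemma key_s17 (a b c d : ℂ)
    (hba : b - a ≠ 0) (hca : c - a ≠ 0) (hda : d - a ≠ 0)
    (hcb : c - b ≠ 0) (hdb : d - b ≠ 0) (hdc : d - c ≠ 0)
    (hab : a - b ≠ 0) (hac : a - c ≠ 0) (had : a - d ≠ 0)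
    (hbc : b - c ≠ 0) (hbd : b - d ≠ 0) (hcd : c - d ≠ 0) :
    ((c-a)*(d-a)+(c-a)*(c-b)+(c-a)*(d-b)+(d-a)*(c-b)+(d-a)*(d-b)+(c-b)*(d-b)) /
      ((c-a)*((d-a)*((c-b)*(d-b)))) +
    (((b-a)*(d-a)+(b-a)*(b-c)+(b-a)*(d-c)+(d-a)*(b-c)+(d-a)*(d-c)+(b-c)*(d-c)) /
      ((b-a)*((d-a)*((b-c)*(d-c)))) +
    (((b-a)*(c-a)+(b-a)*(b-d)+(b-a)*(c-d)+(c-a)*(b-d)+(c-a)*(c-d)+(b-d)*(c-d)) /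
      ((b-a)*((c-a)*((b-d)*(c-d)))) +
    (((a-b)*(d-b)+(a-b)*(a-c)+(a-b)*(d-c)+(d-b)*(a-c)+(d-b)*(d-c)+(a-c)*(d-c)) /
      ((a-b)*((d-b)*((a-c)*(d-c)))) +
    (((a-b)*(c-b)+(a-b)*(a-d)+(a-b)*(c-d)+(c-b)*(a-d)+(c-b)*(c-d)+(a-d)*(c-d)) /
      ((a-b)*((c-b)*((a-d)*(c-d)))) +
    ((a-c)*(b-c)+(a-c)*(a-d)+(a-c)*(b-d)+(b-c)*(a-d)+(b-c)*(b-d)+(a-d)*(b-d)) /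
      ((a-c)*((b-c)*((a-d)*(b-d)))))))) = 0 := by
  set D := (b-a)*((c-a)*((d-a)*((c-b)*((d-b)*(d-c))))) with hD
  have hDne : D ≠ 0 := mul_ne_zero hba (mul_ne_zero hca (mul_ne_zero hda
    (mul_ne_zero hcb (mul_ne_zero hdb hdc))))
  have h1 : ((c-a)*(d-a)+(c-a)*(c-b)+(c-a)*(d-b)+(d-a)*(c-b)+(d-a)*(d-b)+(c-b)*(d-b)) /
      ((c-a)*((d-a)*((c-b)*(d-b)))) =
      (((c-a)*(d-a)+(c-a)*(c-b)+(c-a)*(d-b)+(d-a)*(c-b)+(d-a)*(d-b)+(c-b)*(d-b)) * ((b-a)*(d-c))) / D := by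
    rw [div_eq_div_iff (mul_ne_zero hca (mul_ne_zero hda (mul_ne_zero hcb hdb))) hDne, hD]; ring
  have h2 : ((b-a)*(d-a)+(b-a)*(b-c)+(b-a)*(d-c)+(d-a)*(b-c)+(d-a)*(d-c)+(b-c)*(d-c)) /
      ((b-a)*((d-a)*((b-c)*(d-c)))) =
      (((b-a)*(d-a)+(b-a)*(b-c)+(b-a)*(d-c)+(d-a)*(b-c)+(d-a)*(d-c)+(b-c)*(d-c)) * (-((c-a)*(d-b)))) / D := by
    rw [div_eq_div_iff (mul_ne_zero hba (mul_ne_zero hda (mul_ne_zero hbc hdc))) hDne, hD]; ring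
  have h3 : ((b-a)*(c-a)+(b-a)*(b-d)+(b-a)*(c-d)+(c-a)*(b-d)+(c-a)*(c-d)+(b-d)*(c-d)) /
      ((b-a)*((c-a)*((b-d)*(c-d)))) =
      (((b-a)*(c-a)+(b-a)*(b-d)+(b-a)*(c-d)+(c-a)*(b-d)+(c-a)*(c-d)+(b-d)*(c-d)) * ((d-a)*(c-b))) / D := by
    rw [div_eq_div_iff (mul_ne_zero hba (mul_ne_zero hca (mul_ne_zero hbd hcd))) hDne, hD]; ring
  have h4 : ((a-b)*(d-b)+(a-b)*(a-c)+(a-b)*(d-c)+(d-b)*(a-c)+(d-b)*(d-c)+(a-c)*(d-c)) /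
      ((a-b)*((d-b)*((a-c)*(d-c)))) =
      (((a-b)*(d-b)+(a-b)*(a-c)+(a-b)*(d-c)+(d-b)*(a-c)+(d-b)*(d-c)+(a-c)*(d-c)) * ((d-a)*(c-b))) / D := by
    rw [div_eq_div_iff (mul_ne_zero hab (mul_ne_zero hdb (mul_ne_zero hac hdc))) hDne, hD]; ring
  have h5 : ((a-b)*(c-b)+(a-b)*(a-d)+(a-b)*(c-d)+(c-b)*(a-d)+(c-b)*(c-d)+(a-d)*(c-d)) /
      ((a-b)*((c-b)*((a-d)*(c-d)))) =
      (((a-b)*(c-b)+(a-b)*(a-d)+(a-b)*(c-d)+(c-b)*(a-d)+(c-b)*(c-d)+(a-d)*(c-d)) * (-((c-a)*(d-b)))) / D := by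
    rw [div_eq_div_iff (mul_ne_zero hab (mul_ne_zero hcb (mul_ne_zero had hcd))) hDne, hD]; ring
  have h6 : ((a-c)*(b-c)+(a-c)*(a-d)+(a-c)*(b-d)+(b-c)*(a-d)+(b-c)*(b-d)+(a-d)*(b-d)) /
      ((a-c)*((b-c)*((a-d)*(b-d)))) =
      (((a-c)*(b-c)+(a-c)*(a-d)+(a-c)*(b-d)+(b-c)*(a-d)+(b-c)*(b-d)+(a-d)*(b-d)) * ((b-a)*(d-c))) / D := by
    rw [div_eq_div_iff (mul_ne_zero hac (mul_ne_zero hbc (mul_ne_zero had hbd))) hDne, hD]; ring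
  rw [h1, h2, h3, h4, h5, h6]
  simp only [← add_div]
  rw [div_eq_zero_iff]
  exact Or.inl (by ring)

theorem stmt_17 (x : Fin 4 → ℂ) (hx : Function.Injective x) :
    ∑ S ∈ (Finset.univ : Finset (Fin 4)).powersetCard 2,
      (((S ×ˢ Sᶜ).val.map (fun p => x p.2 - x p.1)).esymm 2) /
        (((S ×ˢ Sᶜ).val.map (fun p => x p.2 - x p.1)).prod) = 0 := by
  have hxne : ∀ i j : Fin 4, i ≠ j → x i - x j ≠ 0 := fun i j h =>
    sub_ne_zero.mpr (fun e => h (hx e))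
  rw [show (Finset.univ : Finset (Fin 4)).powersetCard 2 =
      {({0,1} : Finset (Fin 4)), {0,2}, {0,3}, {1,2}, {1,3}, {2,3}} from by decide]
  rw [Finset.sum_insert (by decide), Finset.sum_insert (by decide),
    Finset.sum_insert (by decide), Finset.sum_insert (by decide),
    Finset.sum_insert (by decide), Finset.sum_singleton]
  rw [show (({0,1} : Finset (Fin 4)) ×ˢ ({0,1} : Finset (Fin 4))ᶜ).val
      = {((0:Fin 4),(2:Fin 4)), (0,3), (1,2), (1,3)} from by decide,
    show (({0,2} : Finset (Fin 4)) ×ˢ ({0,2} : Finset (Fin 4))ᶜ).val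
      = {((0:Fin 4),(1:Fin 4)), (0,3), (2,1), (2,3)} from by decide,
    show (({0,3} : Finset (Fin 4)) ×ˢ ({0,3} : Finset (Fin 4))ᶜ).val
      = {((0:Fin 4),(1:Fin 4)), (0,2), (3,1), (3,2)} from by decide,
    show (({1,2} : Finset (Fin 4)) ×ˢ ({1,2} : Finset (Fin 4))ᶜ).val
      = {((1:Fin 4),(0:Fin 4)), (1,3), (2,0), (2,3)} from by decide,
    show (({1,3} : Finset (Fin 4)) ×ˢ ({1,3} : Finset (Fin 4))ᶜ).val
      = {((1:Fin 4),(0:Fin 4)), (1,2), (3,0), (3,2)} from by decide,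
    show (({2,3} : Finset (Fin 4)) ×ˢ ({2,3} : Finset (Fin 4))ᶜ).val
      = {((2:Fin 4),(0:Fin 4)), (2,1), (3,0), (3,1)} from by decide]
  simp only [Multiset.insert_eq_cons, Multiset.map_cons, Multiset.map_singleton,
    Multiset.prod_cons, Multiset.prod_singleton, esymm2']
  exact key_s17 (x 0) (x 1) (x 2) (x 3)
    (hxne 1 0 (by decide)) (hxne 2 0 (by decide)) (hxne 3 0 (by decide))
    (hxne 2 1 (by decide)) (hxne 3 1 (by decide)) (hxne 3 2 (by decide))
    (hxne 0 1 (by decide)) (hxne 0 2 (by decide)) (hxne 0 3 (by decide))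
    (hxne 1 2 (by decide)) (hxne 1 3 (by decide)) (hxne 2 3 (by decide))
end

section
/- Let m, n ≥ 1, N = m + n. The value of ∑_{S ⊆ {1,…,N}, |S| = m} (∑_{α∈S, β∉S}(x_β − x_α))^{mn} / ∏_{α∈S, β∉S}(x_β − x_α) is the same for every choice of pairwise distinct complex numbers x_1, …, x_N; i.e., this rational expression is a constant function of (x_1,…,x_N) on the locus where all x_i are distinct. -/
open MvPolynomial Finset

namespace Stmt18Aux

variable {N : ℕ}

noncomputable def lin (p : Fin N × Fin N) : MvPolynomial (Fin N) ℂ := X p.2 - X p.1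

def Pall (N : ℕ) : Finset (Fin N × Fin N) := univ.filter fun p => p.1 < p.2

noncomputable def Vm (N : ℕ) : MvPolynomial (Fin N) ℂ := ∏ p ∈ Pall N, lin p

noncomputable def den (S : Finset (Fin N)) : MvPolynomial (Fin N) ℂ := ∏ p ∈ S ×ˢ Sᶜ, lin p

noncomputable def cof (S : Finset (Fin N)) : MvPolynomial (Fin N) ℂ :=
  (-1) ^ (((Pall N).filter fun p => p.1 ∉ S ∧ p.2 ∈ S).card) *
    ((∏ p ∈ (Pall N).filter fun p => p.1 ∈ S ∧ p.2 ∈ S, lin p) *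
      ∏ p ∈ (Pall N).filter fun p => p.1 ∉ S ∧ p.2 ∉ S, lin p)

noncomputable def num (e : ℕ) (S : Finset (Fin N)) : MvPolynomial (Fin N) ℂ :=
  (∑ p ∈ S ×ˢ Sᶜ, lin p) ^ e

noncomputable def Gp (N m e : ℕ) : MvPolynomial (Fin N) ℂ :=
  ∑ S ∈ (univ : Finset (Fin N)).powersetCard m, num e S * cof S

lemma lin_ne_zero {p : Fin N × Fin N} (h : p.1 ≠ p.2) : lin p ≠ 0 := by
  have : (X p.2 : MvPolynomial (Fin N) ℂ) ≠ X p.1 := fun he => h (X_injective he).symm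
  simpa [lin, sub_eq_zero] using this

lemma den_mul_cof (S : Finset (Fin N)) : den S * cof S = Vm N := by
  classical
  have hA : (S ×ˢ Sᶜ).filter (fun p => p.1 < p.2) =
      (Pall N).filter fun p => p.1 ∈ S ∧ p.2 ∉ S := by
    ext p
    simp only [mem_filter, mem_product, mem_compl, Pall, mem_univ, true_and]
    tauto
  have hBprod : ∏ p ∈ (S ×ˢ Sᶜ).filter (fun p => ¬ p.1 < p.2), lin p =
      ∏ p ∈ (Pall N).filter (fun p => p.1 ∉ S ∧ p.2 ∈ S), -(lin p) := by
    refine Finset.prod_nbij' Prod.swap Prod.swap ?_ ?_ (by simp) (by simp) ?_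
    · intro p hp
      simp only [mem_filter, mem_product, mem_compl] at hp
      have hne : p.1 ≠ p.2 := fun he => hp.1.2 (he ▸ hp.1.1)
      simp only [mem_filter, Pall, mem_univ, true_and, Prod.fst_swap, Prod.snd_swap]
      exact ⟨lt_of_le_of_ne (not_lt.mp hp.2) (Ne.symm hne), hp.1.2, hp.1.1⟩
    · intro p hp
      simp only [mem_filter, Pall, mem_univ, true_and] at hp
      simp only [mem_filter, mem_product, mem_compl, Prod.fst_swap, Prod.snd_swap, not_lt]
      exact ⟨⟨hp.2.2, hp.2.1⟩, le_of_lt hp.1⟩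
    · intro p hp
      simp [lin]
  have hden : den S = (∏ p ∈ (Pall N).filter (fun p => p.1 ∈ S ∧ p.2 ∉ S), lin p) *
      ((-1) ^ (((Pall N).filter fun p => p.1 ∉ S ∧ p.2 ∈ S).card) *
        ∏ p ∈ (Pall N).filter (fun p => p.1 ∉ S ∧ p.2 ∈ S), lin p) := by
    rw [den, ← Finset.prod_filter_mul_prod_filter_not (S ×ˢ Sᶜ) (fun p => p.1 < p.2), hA, hBprod]
    have : ∀ p : Fin N × Fin N, -(lin p) = (-1 : MvPolynomial (Fin N) ℂ) * lin p := fun p => by ring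
    simp only [this, Finset.prod_mul_distrib, Finset.prod_const]
  have hV : Vm N = ((∏ p ∈ (Pall N).filter (fun p => p.1 ∈ S ∧ p.2 ∈ S), lin p) *
        ∏ p ∈ (Pall N).filter (fun p => p.1 ∈ S ∧ p.2 ∉ S), lin p) *
      ((∏ p ∈ (Pall N).filter (fun p => p.1 ∉ S ∧ p.2 ∈ S), lin p) *
        ∏ p ∈ (Pall N).filter (fun p => p.1 ∉ S ∧ p.2 ∉ S), lin p) := by
    rw [Vm, ← Finset.prod_filter_mul_prod_filter_not (Pall N) (fun p => p.1 ∈ S),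
      ← Finset.prod_filter_mul_prod_filter_not ((Pall N).filter (fun p => p.1 ∈ S)) (fun p => p.2 ∈ S),
      ← Finset.prod_filter_mul_prod_filter_not ((Pall N).filter (fun p => ¬ p.1 ∈ S)) (fun p => p.2 ∈ S),
      Finset.filter_filter, Finset.filter_filter, Finset.filter_filter, Finset.filter_filter]
  have hsq : ((-1 : MvPolynomial (Fin N) ℂ) ^ (((Pall N).filter fun p => p.1 ∉ S ∧ p.2 ∈ S).card)) *
      ((-1) ^ (((Pall N).filter fun p => p.1 ∉ S ∧ p.2 ∈ S).card)) = 1 := by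
    rw [← pow_add]
    exact Even.neg_one_pow ⟨_, rfl⟩
  rw [hden, cof, hV]
  calc _ = (((-1 : MvPolynomial (Fin N) ℂ) ^ (((Pall N).filter fun p => p.1 ∉ S ∧ p.2 ∈ S).card)) *
      ((-1) ^ (((Pall N).filter fun p => p.1 ∉ S ∧ p.2 ∈ S).card))) *
      (((∏ p ∈ (Pall N).filter (fun p => p.1 ∈ S ∧ p.2 ∈ S), lin p) *
        ∏ p ∈ (Pall N).filter (fun p => p.1 ∈ S ∧ p.2 ∉ S), lin p) *
      ((∏ p ∈ (Pall N).filter (fun p => p.1 ∉ S ∧ p.2 ∈ S), lin p) *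
        ∏ p ∈ (Pall N).filter (fun p => p.1 ∉ S ∧ p.2 ∉ S), lin p)) := by ring
  _ = _ := by rw [hsq, one_mul]


lemma den_ne_zero (S : Finset (Fin N)) : den S ≠ 0 := by
  rw [den, Finset.prod_ne_zero_iff]
  intro p hp
  rw [mem_product, mem_compl] at hp
  exact lin_ne_zero (fun he => hp.2 (he ▸ hp.1))

lemma Vm_ne_zero : Vm N ≠ 0 := by
  rw [Vm, Finset.prod_ne_zero_iff]
  intro p hp
  rw [Pall, mem_filter] at hp
  exact lin_ne_zero (ne_of_lt hp.2)

lemma Vm_nested : Vm N = ∏ i : Fin N, ∏ j ∈ Finset.Ioi i, (X j - X i : MvPolynomial (Fin N) ℂ) := by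
  rw [Finset.prod_sigma', Vm]
  refine (Finset.prod_nbij (fun p => ⟨p.1, p.2⟩) ?_ ?_ ?_ ?_).symm
  · intro p hp
    simp only [Finset.mem_sigma, mem_univ, Finset.mem_Ioi] at hp
    simp [Pall, hp.2]
  · intro p _ q _ h
    simpa [Sigma.ext_iff, Prod.ext_iff] using h
  · intro p hp
    simp only [Pall, Finset.coe_filter, Set.mem_setOf_eq, mem_univ, true_and] at hp
    exact ⟨⟨p.1, p.2⟩, by simp [hp], rfl⟩
  · intro p _; rfl

lemma rename_Vm {i j : Fin N} (hij : i ≠ j) :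
    rename (Equiv.swap i j) (Vm N) = -Vm N := by
  have hVd : Vm N = (Matrix.vandermonde (X : Fin N → MvPolynomial (Fin N) ℂ)).det := by
    rw [Matrix.det_vandermonde, Vm_nested]
  have h1 : rename (Equiv.swap i j) (Vm N) =
      ((Matrix.vandermonde (X : Fin N → MvPolynomial (Fin N) ℂ)).map
        (rename (Equiv.swap i j))).det := by
    rw [hVd]
    exact AlgHom.map_det (rename (Equiv.swap i j)) _
  have h2 : ((Matrix.vandermonde (X : Fin N → MvPolynomial (Fin N) ℂ)).map
      (rename (Equiv.swap i j))) =
      (Matrix.vandermonde (X : Fin N → MvPolynomial (Fin N) ℂ)).submatrix (Equiv.swap i j) id := by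
    funext a b
    simp [Matrix.vandermonde, Matrix.map, Matrix.submatrix]
  rw [h1, h2, Matrix.det_permute, Equiv.Perm.sign_swap hij, hVd]
  simp

lemma image_compl (τ : Equiv.Perm (Fin N)) (S : Finset (Fin N)) :
    Sᶜ.image τ = (S.image τ)ᶜ := by
  ext b
  simp only [mem_image, mem_compl]
  constructor
  · rintro ⟨a, ha, rfl⟩ ⟨a', ha', he⟩
    exact ha (τ.injective he ▸ ha')
  · intro hb
    exact ⟨τ.symm b, fun hs => hb ⟨τ.symm b, hs, by simp⟩, by simp⟩

lemma image_prodmap (τ : Equiv.Perm (Fin N)) (S : Finset (Fin N)) :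
    (S.image τ) ×ˢ (S.image τ)ᶜ = (S ×ˢ Sᶜ).image (Prod.map τ τ) := by
  rw [← image_compl]
  ext p
  simp only [mem_product, mem_image, mem_compl, Prod.map]
  constructor
  · rintro ⟨⟨a, ha, h1⟩, ⟨b, hb, h2⟩⟩
    exact ⟨(a, b), ⟨ha, hb⟩, by simp [h1, h2]⟩
  · rintro ⟨⟨a, b⟩, ⟨ha, hb⟩, rfl⟩
    exact ⟨⟨a, ha, rfl⟩, ⟨b, hb, rfl⟩⟩

lemma prodmap_injective (τ : Equiv.Perm (Fin N)) :
    Function.Injective (Prod.map (τ : Fin N → Fin N) τ) :=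
  Function.Injective.prodMap τ.injective τ.injective

lemma rename_lin (τ : Equiv.Perm (Fin N)) (p : Fin N × Fin N) :
    rename (τ : Fin N → Fin N) (lin p) = lin (Prod.map τ τ p) := by
  simp [lin, Prod.map]

lemma rename_den (τ : Equiv.Perm (Fin N)) (S : Finset (Fin N)) :
    rename (τ : Fin N → Fin N) (den S) = den (S.image τ) := by
  rw [den, map_prod, den, image_prodmap, Finset.prod_image
    (fun a _ b _ h => prodmap_injective τ h)]
  exact Finset.prod_congr rfl fun p _ => rename_lin τ p

lemma rename_num (e : ℕ) (τ : Equiv.Perm (Fin N)) (S : Finset (Fin N)) :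
    rename (τ : Fin N → Fin N) (num e S) = num e (S.image τ) := by
  rw [num, map_pow, map_sum, num, image_prodmap, Finset.sum_image
    (fun a _ b _ h => prodmap_injective τ h)]
  congr 1
  exact Finset.sum_congr rfl fun p _ => rename_lin τ p


lemma rename_cof {i j : Fin N} (hij : i ≠ j) (S : Finset (Fin N)) :
    rename (Equiv.swap i j : Fin N → Fin N) (cof S) = -(cof (S.image (Equiv.swap i j))) := by
  have h := congrArg (rename (Equiv.swap i j : Fin N → Fin N)) (den_mul_cof S)
  rw [map_mul, rename_den, rename_Vm hij] at h
  have h2 : den (S.image (Equiv.swap i j)) * cof (S.image (Equiv.swap i j)) = Vm N :=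
    den_mul_cof _
  apply mul_left_cancel₀ (den_ne_zero (S.image (Equiv.swap i j)))
  rw [h, mul_neg, h2]

lemma image_mem_powersetCard {m : ℕ} (τ : Equiv.Perm (Fin N)) {S : Finset (Fin N)}
    (hS : S ∈ (univ : Finset (Fin N)).powersetCard m) :
    S.image τ ∈ (univ : Finset (Fin N)).powersetCard m := by
  rw [Finset.mem_powersetCard_univ] at hS ⊢
  rw [Finset.card_image_of_injective _ τ.injective, hS]

lemma rename_Gp {m e : ℕ} {i j : Fin N} (hij : i ≠ j) :
    rename (Equiv.swap i j : Fin N → Fin N) (Gp N m e) = -(Gp N m e) := by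
  rw [Gp, map_sum, ← Finset.sum_neg_distrib]
  refine Finset.sum_nbij' (fun S => S.image (Equiv.swap i j)) (fun S => S.image (Equiv.swap i j))
    (fun S hS => image_mem_powersetCard _ hS) (fun S hS => image_mem_powersetCard _ hS)
    ?_ ?_ ?_
  · intro S _
    simp only [Finset.image_image]
    have : ((Equiv.swap i j : Fin N → Fin N) ∘ (Equiv.swap i j : Fin N → Fin N)) = id := by
      funext a; simp
    rw [this, Finset.image_id]
  · intro S _
    simp only [Finset.image_image]
    have : ((Equiv.swap i j : Fin N → Fin N) ∘ (Equiv.swap i j : Fin N → Fin N)) = id := by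
      funext a; simp
    rw [this, Finset.image_id]
  · intro S _
    rw [map_mul, rename_num, rename_cof hij, mul_neg, neg_mul_eq_mul_neg]

noncomputable def subst (i j : Fin N) : MvPolynomial (Fin N) ℂ →ₐ[ℂ] MvPolynomial (Fin N) ℂ :=
  aeval (Function.update X i (X j))

lemma subst_X (i j k : Fin N) :
    subst i j (X k) = if k = i then X j else X k := by
  rw [subst, aeval_X]
  by_cases h : k = i
  · subst h; simp
  · rw [Function.update_of_ne h, if_neg h]

lemma dvd_sub_subst (i j : Fin N) (p : MvPolynomial (Fin N) ℂ) :
    (X i - X j : MvPolynomial (Fin N) ℂ) ∣ p - subst i j p := by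
  induction p using MvPolynomial.induction_on with
  | C a => simp [subst, aeval_C, algebraMap_eq]
  | add p q hp hq =>
    rw [map_add]
    have : p + q - (subst i j p + subst i j q) = (p - subst i j p) + (q - subst i j q) := by ring
    rw [this]; exact dvd_add hp hq
  | mul_X p k hp =>
    rw [map_mul]
    have : p * X k - subst i j p * subst i j (X k) =
        (p - subst i j p) * X k + subst i j p * (X k - subst i j (X k)) := by ring
    rw [this]
    refine dvd_add (Dvd.dvd.mul_right hp _) (Dvd.dvd.mul_left ?_ _)
    rw [subst_X]
    by_cases h : k = i
    · subst h; simp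
    · simp [h]

lemma subst_eq_zero_of_dvd {i j : Fin N} {p : MvPolynomial (Fin N) ℂ}
    (h : (X i - X j : MvPolynomial (Fin N) ℂ) ∣ p) : subst i j p = 0 := by
  obtain ⟨c, rfl⟩ := h
  rw [map_mul]
  have : subst i j (X i - X j : MvPolynomial (Fin N) ℂ) = 0 := by
    by_cases hij : j = i
    · subst hij; simp
    · rw [map_sub, subst_X, subst_X, if_pos rfl, if_neg hij, sub_self]
  rw [this, zero_mul]

lemma dvd_of_subst_eq_zero {i j : Fin N} {p : MvPolynomial (Fin N) ℂ}
    (h : subst i j p = 0) : (X i - X j : MvPolynomial (Fin N) ℂ) ∣ p := by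
  have := dvd_sub_subst i j p
  rwa [h, sub_zero] at this

lemma prime_X_sub_X {i j : Fin N} (hij : i ≠ j) :
    Prime (X i - X j : MvPolynomial (Fin N) ℂ) := by
  constructor
  · exact lin_ne_zero (p := (j, i)) (Ne.symm hij)
  constructor
  · intro hu
    have h0 : subst i j (X i - X j : MvPolynomial (Fin N) ℂ) = 0 :=
      subst_eq_zero_of_dvd dvd_rfl
    have := hu.map (subst i j)
    rw [h0] at this
    exact not_isUnit_zero this
  · intro a b hab
    have h0 : subst i j (a * b) = 0 := subst_eq_zero_of_dvd hab
    rw [map_mul] at h0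
    rcases mul_eq_zero.mp h0 with h | h
    · exact Or.inl (dvd_of_subst_eq_zero h)
    · exact Or.inr (dvd_of_subst_eq_zero h)

lemma prime_lin {p : Fin N × Fin N} (h : p.1 ≠ p.2) : Prime (lin p) :=
  prime_X_sub_X (Ne.symm h)


lemma subst_Gp_eq_zero {m e : ℕ} {i j : Fin N} (hij : i ≠ j) :
    subst i j (Gp N m e) = 0 := by
  have hcomp : (Function.update X i (X j : MvPolynomial (Fin N) ℂ)) ∘ (Equiv.swap i j) =
      Function.update X i (X j) := by
    funext k
    simp only [Function.comp_apply]
    rcases eq_or_ne k i with rfl | hki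
    · rw [Equiv.swap_apply_left, Function.update_of_ne (Ne.symm hij), Function.update_self]
    · rcases eq_or_ne k j with rfl | hkj
      · rw [Equiv.swap_apply_right, Function.update_self, Function.update_of_ne hki]
      · rw [Equiv.swap_apply_of_ne_of_ne hki hkj]
  have h1 : subst i j (rename (Equiv.swap i j : Fin N → Fin N) (Gp N m e)) =
      subst i j (Gp N m e) := by
    rw [subst, aeval_rename, hcomp]
  rw [rename_Gp hij, map_neg] at h1
  have h2 : (2 : MvPolynomial (Fin N) ℂ) * subst i j (Gp N m e) = 0 := by
    rw [two_mul]
    linear_combination -h1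
  rcases mul_eq_zero.mp h2 with h | h
  · exact absurd h two_ne_zero
  · exact h

lemma lin_dvd_Gp {m e : ℕ} {p : Fin N × Fin N} (hp : p ∈ Pall N) : lin p ∣ Gp N m e := by
  have hne : p.1 ≠ p.2 := by
    rw [Pall, mem_filter] at hp
    exact ne_of_lt hp.2
  have h := dvd_of_subst_eq_zero (subst_Gp_eq_zero (i := p.1) (j := p.2) hne (m := m) (e := e))
  have : lin p = -(X p.1 - X p.2 : MvPolynomial (Fin N) ℂ) := by rw [lin]; ring
  rw [this, neg_dvd]
  exact h

lemma not_associated_lin {p q : Fin N × Fin N} (hp : p ∈ Pall N) (hq : q ∈ Pall N)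
    (hpq : p ≠ q) : ¬ Associated (lin p) (lin q) := by
  rw [Pall, mem_filter] at hp hq
  intro hassoc
  have hdvd : lin p ∣ lin q := hassoc.dvd
  have h0 : subst p.1 p.2 (lin p) = 0 := by
    rw [lin, map_sub, subst_X, subst_X, if_pos rfl, if_neg (ne_of_gt hp.2), sub_self]
  have h0q : subst p.1 p.2 (lin q) = 0 := by
    obtain ⟨c, hc⟩ := hdvd
    rw [hc, map_mul, h0, zero_mul]
  rw [lin, map_sub, subst_X, subst_X, sub_eq_zero] at h0q
  by_cases h1 : q.2 = p.1 <;> by_cases h2 : q.1 = p.1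
  · exact absurd (h1 ▸ h2 ▸ rfl : q.2 = q.1) (ne_of_gt hq.2)
  · rw [if_pos h1, if_neg h2] at h0q
    have e1 : p.2 = q.1 := X_injective h0q
    have l1 : q.1 < p.1 := by rw [← h1]; exact hq.2
    have l2 : p.1 < q.1 := by rw [← e1]; exact hp.2
    exact absurd (l1.trans l2) (lt_irrefl _)
  · rw [if_neg h1, if_pos h2] at h0q
    have : q.2 = p.2 := X_injective h0q
    exact hpq (Prod.ext_iff.mpr ⟨h2, this⟩).symm
  · rw [if_neg h1, if_neg h2] at h0q
    exact absurd (X_injective h0q) (ne_of_gt hq.2)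

lemma prod_primes_dvd' {ι : Type*} [DecidableEq ι] (s : Finset ι)
    (f : ι → MvPolynomial (Fin N) ℂ) (G : MvPolynomial (Fin N) ℂ)
    (hprime : ∀ i ∈ s, Prime (f i)) (hdvd : ∀ i ∈ s, f i ∣ G)
    (hna : ∀ i ∈ s, ∀ j ∈ s, i ≠ j → ¬ Associated (f i) (f j)) :
    (∏ i ∈ s, f i) ∣ G := by
  classical
  induction s using Finset.induction_on generalizing G with
  | empty => simp
  | @insert a s' ha ih =>
    rw [Finset.prod_insert ha]
    obtain ⟨G', rfl⟩ := hdvd a (Finset.mem_insert_self a s')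
    refine mul_dvd_mul_left _ (ih G' ?_ ?_ ?_)
    · intro i hi; exact hprime i (Finset.mem_insert_of_mem hi)
    · intro i hi
      have hia : i ≠ a := fun he => ha (he ▸ hi)
      have hpi := hprime i (Finset.mem_insert_of_mem hi)
      have := hdvd i (Finset.mem_insert_of_mem hi)
      rcases hpi.dvd_or_dvd this with h | h
      · exfalso
        have hpa := hprime a (Finset.mem_insert_self a s')
        have : Associated (f i) (f a) := hpi.associated_of_dvd hpa h
        exact hna i (Finset.mem_insert_of_mem hi) a (Finset.mem_insert_self a s') hia this
      · exact h
    · intro i hi j hj hij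
      exact hna i (Finset.mem_insert_of_mem hi) j (Finset.mem_insert_of_mem hj) hij

lemma Vm_dvd_Gp (m e : ℕ) : Vm N ∣ Gp N m e := by
  rw [Vm]
  refine prod_primes_dvd' _ _ _ ?_ ?_ ?_
  · intro p hp
    rw [Pall, mem_filter] at hp
    exact prime_lin (ne_of_lt hp.2)
  · intro p hp; exact lin_dvd_Gp hp
  · intro p hp q hq hpq; exact not_associated_lin hp hq hpq


lemma filterA_eq (S : Finset (Fin N)) :
    (S ×ˢ Sᶜ).filter (fun p => p.1 < p.2) = (Pall N).filter fun p => p.1 ∈ S ∧ p.2 ∉ S := by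
  ext p
  simp only [mem_filter, mem_product, mem_compl, Pall, mem_univ, true_and]
  tauto

lemma card_B_eq (S : Finset (Fin N)) :
    ((S ×ˢ Sᶜ).filter (fun p => ¬ p.1 < p.2)).card =
    ((Pall N).filter fun p => p.1 ∉ S ∧ p.2 ∈ S).card := by
  refine Finset.card_nbij' Prod.swap Prod.swap ?_ ?_ (by intro p _; simp) (by intro p _; simp)
  · intro p hp
    simp only [Finset.mem_coe, mem_filter, mem_product, mem_compl] at hp
    have hne : p.1 ≠ p.2 := fun he => hp.1.2 (he ▸ hp.1.1)
    simp only [Finset.mem_coe, mem_filter, Pall, mem_univ, true_and, Prod.fst_swap, Prod.snd_swap]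
    exact ⟨lt_of_le_of_ne (not_lt.mp hp.2) (Ne.symm hne), hp.1.2, hp.1.1⟩
  · intro p hp
    simp only [Finset.mem_coe, mem_filter, Pall, mem_univ, true_and] at hp
    simp only [Finset.mem_coe, mem_filter, mem_product, mem_compl, Prod.fst_swap, Prod.snd_swap, not_lt]
    exact ⟨⟨hp.2.2, hp.2.1⟩, le_of_lt hp.1⟩

lemma card_AB (S : Finset (Fin N)) :
    ((Pall N).filter fun p => p.1 ∈ S ∧ p.2 ∉ S).card +
    ((Pall N).filter fun p => p.1 ∉ S ∧ p.2 ∈ S).card = S.card * Sᶜ.card := by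
  classical
  rw [← Finset.card_product, ← Finset.card_filter_add_card_filter_not
    (s := S ×ˢ Sᶜ) (p := fun p => p.1 < p.2), filterA_eq, card_B_eq]

lemma card_split (S : Finset (Fin N)) :
    (((Pall N).filter fun p => p.1 ∈ S ∧ p.2 ∈ S).card +
     ((Pall N).filter fun p => p.1 ∈ S ∧ p.2 ∉ S).card) +
    (((Pall N).filter fun p => p.1 ∉ S ∧ p.2 ∈ S).card +
     ((Pall N).filter fun p => p.1 ∉ S ∧ p.2 ∉ S).card) = (Pall N).card := by
  classical
  rw [← Finset.filter_filter, ← Finset.filter_filter, ← Finset.filter_filter,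
    ← Finset.filter_filter,
    Finset.card_filter_add_card_filter_not (p := fun p : Fin N × Fin N => p.2 ∈ S),
    Finset.card_filter_add_card_filter_not (p := fun p : Fin N × Fin N => p.2 ∈ S),
    Finset.card_filter_add_card_filter_not (p := fun p : Fin N × Fin N => p.1 ∈ S)]

lemma lin_homog (p : Fin N × Fin N) : (lin p).IsHomogeneous 1 :=
  (isHomogeneous_X _ _).sub (isHomogeneous_X _ _)

lemma prodlin_homog (s : Finset (Fin N × Fin N)) :
    (∏ p ∈ s, lin p).IsHomogeneous s.card := by
  have := IsHomogeneous.prod s lin (fun _ => 1) (fun p _ => lin_homog p)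
  simpa using this

lemma num_homog (e : ℕ) (S : Finset (Fin N)) : (num e S).IsHomogeneous e := by
  have h1 : (∑ p ∈ S ×ˢ Sᶜ, lin p).IsHomogeneous 1 :=
    IsHomogeneous.sum _ _ _ (fun p _ => lin_homog p)
  have := h1.pow e
  rw [one_mul] at this
  exact this

lemma neg_one_pow_homog (b : ℕ) :
    ((-1 : MvPolynomial (Fin N) ℂ) ^ b).IsHomogeneous 0 := by
  have : ((-1 : MvPolynomial (Fin N) ℂ) ^ b) = C ((-1 : ℂ) ^ b) := by
    rw [map_pow, map_neg, map_one]
  rw [this]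
  exact isHomogeneous_C _ _

lemma cof_homog (S : Finset (Fin N)) :
    (cof S).IsHomogeneous (((Pall N).filter fun p => p.1 ∈ S ∧ p.2 ∈ S).card +
      ((Pall N).filter fun p => p.1 ∉ S ∧ p.2 ∉ S).card) := by
  rw [cof]
  have := (neg_one_pow_homog (N := N)
      (((Pall N).filter fun p => p.1 ∉ S ∧ p.2 ∈ S).card)).mul
    ((prodlin_homog ((Pall N).filter fun p => p.1 ∈ S ∧ p.2 ∈ S)).mul
      (prodlin_homog ((Pall N).filter fun p => p.1 ∉ S ∧ p.2 ∉ S)))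
  simpa using this

lemma Vm_homog : (Vm N).IsHomogeneous (Pall N).card := prodlin_homog _

lemma Gp_homog (m n : ℕ) (hN : N = m + n) :
    (Gp N m (m * n)).IsHomogeneous (Pall N).card := by
  refine IsHomogeneous.sum _ _ _ (fun S hS => ?_)
  have hScard : S.card = m := (Finset.mem_powersetCard_univ).mp hS
  have hSc : Sᶜ.card = n := by
    rw [Finset.card_compl, hScard]
    simp [hN]
  have hAB := card_AB S
  rw [hScard, hSc] at hAB
  have hsplit := card_split S
  have hdeg : m * n + (((Pall N).filter fun p => p.1 ∈ S ∧ p.2 ∈ S).card +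
      ((Pall N).filter fun p => p.1 ∉ S ∧ p.2 ∉ S).card) = (Pall N).card := by omega
  have := (num_homog (m * n) S).mul (cof_homog S)
  rwa [hdeg] at this


lemma exists_const (m n : ℕ) :
    ∃ c : ℂ, Gp (m + n) m (m * n) = Vm (m + n) * C c := by
  classical
  set N := m + n
  obtain ⟨q, hq⟩ := Vm_dvd_Gp (N := N) m (m * n)
  set D := (Pall N).card with hD
  have hGh : (Gp N m (m * n)).IsHomogeneous D := Gp_homog m n rfl
  have hVh : (Vm N).IsHomogeneous D := Vm_homog
  have hcomp : ∀ d : ℕ, d ≠ 0 → homogeneousComponent d q = 0 := by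
    intro d hd
    by_cases hdt : q.totalDegree < d
    · exact homogeneousComponent_eq_zero _ _ hdt
    push_neg at hdt
    have hsum : ∑ i ∈ Finset.range (q.totalDegree + 1), homogeneousComponent i q = q :=
      sum_homogeneousComponent q
    have hGd : homogeneousComponent (D + d) (Gp N m (m * n)) = 0 := by
      rw [homogeneousComponent_of_mem ((mem_homogeneousSubmodule _ _).mpr hGh)]
      rw [if_neg (by omega)]
    have hVq : homogeneousComponent (D + d) (Vm N * q) = Vm N * homogeneousComponent d q := by
      conv_lhs => rw [← hsum, Finset.mul_sum]
      rw [map_sum]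
      have hterm : ∀ i ∈ Finset.range (q.totalDegree + 1),
          homogeneousComponent (D + d) (Vm N * homogeneousComponent i q) =
          if D + d = D + i then Vm N * homogeneousComponent i q else 0 := by
        intro i _
        exact homogeneousComponent_of_mem ((mem_homogeneousSubmodule _ _).mpr
          (hVh.mul (homogeneousComponent_isHomogeneous i q)))
      rw [Finset.sum_congr rfl hterm,
        Finset.sum_eq_single_of_mem d (Finset.mem_range.mpr (by omega))
          (fun i _ hne => if_neg (fun hc => hne (by omega))), if_pos rfl]
    rw [← hq, hGd] at hVq
    rcases mul_eq_zero.mp hVq.symm with h | h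
    · exact absurd h Vm_ne_zero
    · exact h
  have hsum : ∑ i ∈ Finset.range (q.totalDegree + 1), homogeneousComponent i q = q :=
    sum_homogeneousComponent q
  have hq0 : q = C (q.coeff 0) := by
    conv_lhs => rw [← hsum]
    rw [Finset.sum_eq_single_of_mem 0 (Finset.mem_range.mpr (by omega))
      (fun i _ hi => hcomp i hi), homogeneousComponent_zero]
  exact ⟨q.coeff 0, by rw [hq]; exact congrArg _ hq0⟩


lemma eval_sum_eq (m n : ℕ) (c : ℂ) (hc : Gp (m + n) m (m * n) = Vm (m + n) * C c)
    (x : Fin (m + n) → ℂ) (hx : Function.Injective x) :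
    ∑ S ∈ Finset.univ.powersetCard m,
      (∑ α ∈ S, ∑ β ∈ Sᶜ, (x β - x α)) ^ (m * n) /
        ∏ α ∈ S, ∏ β ∈ Sᶜ, (x β - x α) = c := by
  classical
  have hEden : ∀ S : Finset (Fin (m + n)),
      eval x (den S) = ∏ α ∈ S, ∏ β ∈ Sᶜ, (x β - x α) := by
    intro S
    rw [den, map_prod, ← Finset.prod_product']
    exact Finset.prod_congr rfl (fun p _ => by simp [lin])
  have hEnum : ∀ S : Finset (Fin (m + n)), eval x (num (m * n) S) =
      (∑ α ∈ S, ∑ β ∈ Sᶜ, (x β - x α)) ^ (m * n) := by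
    intro S
    rw [num, map_pow, map_sum, ← Finset.sum_product']
    congr 1
    exact Finset.sum_congr rfl (fun p _ => by simp [lin])
  have hden0 : ∀ S : Finset (Fin (m + n)), eval x (den S) ≠ 0 := by
    intro S
    rw [hEden]
    refine Finset.prod_ne_zero_iff.mpr (fun α hα => Finset.prod_ne_zero_iff.mpr (fun β hβ => ?_))
    have hne : β ≠ α := fun he => (Finset.mem_compl.mp hβ) (he ▸ hα)
    exact sub_ne_zero.mpr (fun he => hne (hx he))
  have hV0 : eval x (Vm (m + n)) ≠ 0 := by
    rw [Vm, map_prod]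
    refine Finset.prod_ne_zero_iff.mpr (fun p hp => ?_)
    rw [Pall, mem_filter] at hp
    simp only [lin, map_sub, eval_X]
    exact sub_ne_zero.mpr (fun he => absurd (hx he) (ne_of_gt hp.2))
  calc ∑ S ∈ Finset.univ.powersetCard m,
      (∑ α ∈ S, ∑ β ∈ Sᶜ, (x β - x α)) ^ (m * n) /
        ∏ α ∈ S, ∏ β ∈ Sᶜ, (x β - x α)
      = ∑ S ∈ Finset.univ.powersetCard m,
        eval x (num (m * n) S * cof S) / eval x (Vm (m + n)) := by
        refine Finset.sum_congr rfl (fun S _ => ?_)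
        rw [← hEnum, ← hEden, map_mul, div_eq_div_iff (hden0 S) hV0]
        have hdc := congrArg (eval x) (den_mul_cof S)
        rw [map_mul] at hdc
        linear_combination (-(eval x (num (m * n) S))) * hdc
    _ = (∑ S ∈ Finset.univ.powersetCard m,
        eval x (num (m * n) S * cof S)) / eval x (Vm (m + n)) := by
        rw [Finset.sum_div]
    _ = eval x (Gp (m + n) m (m * n)) / eval x (Vm (m + n)) := by rw [Gp, map_sum]
    _ = c := by rw [hc, map_mul, eval_C, mul_comm, mul_div_assoc, div_self hV0, mul_one]

end Stmt18Aux

theorem stmt_18 (m n : ℕ) (hm : 1 ≤ m) (hn : 1 ≤ n)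
    (x y : Fin (m + n) → ℂ) (hx : Function.Injective x) (hy : Function.Injective y) :
    ∑ S ∈ Finset.univ.powersetCard m,
      (∑ α ∈ S, ∑ β ∈ Sᶜ, (x β - x α)) ^ (m * n) /
        ∏ α ∈ S, ∏ β ∈ Sᶜ, (x β - x α) =
    ∑ S ∈ Finset.univ.powersetCard m,
      (∑ α ∈ S, ∑ β ∈ Sᶜ, (y β - y α)) ^ (m * n) /
        ∏ α ∈ S, ∏ β ∈ Sᶜ, (y β - y α) := by
  obtain ⟨c, hc⟩ := Stmt18Aux.exists_const m n
  rw [Stmt18Aux.eval_sum_eq m n c hc x hx, Stmt18Aux.eval_sum_eq m n c hc y hy]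
end

section
/- Let x_1, x_2, x_3 be pairwise distinct complex numbers. Then the sum over all permutations σ ∈ S_3 of e_2({x_{σ(2)}−x_{σ(1)}, x_{σ(3)}−x_{σ(1)}, x_{σ(3)}−x_{σ(2)}}) · e_1({x_{σ(2)}−x_{σ(1)}, x_{σ(3)}−x_{σ(1)}, x_{σ(3)}−x_{σ(2)}}) / [(x_{σ(2)}−x_{σ(1)})(x_{σ(3)}−x_{σ(1)})(x_{σ(3)}−x_{σ(2)})] equals 24, where e_1, e_2 are the first and second elementary symmetric polynomials in three variables. -/
set_option maxHeartbeats 1000000 in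
theorem stmt_19 (x : Fin 3 → ℂ) (hx : Function.Injective x) :
    ∑ σ : Equiv.Perm (Fin 3),
      (((x (σ 1) - x (σ 0)) * (x (σ 2) - x (σ 0)) +
          (x (σ 1) - x (σ 0)) * (x (σ 2) - x (σ 1)) +
          (x (σ 2) - x (σ 0)) * (x (σ 2) - x (σ 1))) *
        ((x (σ 1) - x (σ 0)) + (x (σ 2) - x (σ 0)) + (x (σ 2) - x (σ 1)))) /
        ((x (σ 1) - x (σ 0)) * (x (σ 2) - x (σ 0)) * (x (σ 2) - x (σ 1))) = 24 := by
  have h10 : x 1 - x 0 ≠ 0 := sub_ne_zero.2 fun h => by simpa using hx h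
  have h20 : x 2 - x 0 ≠ 0 := sub_ne_zero.2 fun h => by simpa using hx h
  have h21 : x 2 - x 1 ≠ 0 := sub_ne_zero.2 fun h => by simpa using hx h
  have h01 : x 0 - x 1 ≠ 0 := sub_ne_zero.2 fun h => by simpa using hx h
  have h02 : x 0 - x 2 ≠ 0 := sub_ne_zero.2 fun h => by simpa using hx h
  have h12 : x 1 - x 2 ≠ 0 := sub_ne_zero.2 fun h => by simpa using hx h
  rw [show (Finset.univ : Finset (Equiv.Perm (Fin 3))) =
      {Equiv.refl _, Equiv.swap 0 1, Equiv.swap 0 2, Equiv.swap 1 2,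
        Equiv.swap 0 1 * Equiv.swap 1 2, Equiv.swap 1 2 * Equiv.swap 0 1} from by decide,
    Finset.sum_insert (by decide), Finset.sum_insert (by decide),
    Finset.sum_insert (by decide), Finset.sum_insert (by decide),
    Finset.sum_insert (by decide), Finset.sum_singleton]
  simp only [Equiv.refl_apply,
    show (Equiv.swap 0 1 : Equiv.Perm (Fin 3)) 0 = 1 from rfl,
    show (Equiv.swap 0 1 : Equiv.Perm (Fin 3)) 1 = 0 from rfl,
    show (Equiv.swap 0 1 : Equiv.Perm (Fin 3)) 2 = 2 from rfl,
    show (Equiv.swap 0 2 : Equiv.Perm (Fin 3)) 0 = 2 from rfl,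
    show (Equiv.swap 0 2 : Equiv.Perm (Fin 3)) 1 = 1 from rfl,
    show (Equiv.swap 0 2 : Equiv.Perm (Fin 3)) 2 = 0 from rfl,
    show (Equiv.swap 1 2 : Equiv.Perm (Fin 3)) 0 = 0 from rfl,
    show (Equiv.swap 1 2 : Equiv.Perm (Fin 3)) 1 = 2 from rfl,
    show (Equiv.swap 1 2 : Equiv.Perm (Fin 3)) 2 = 1 from rfl,
    show (Equiv.swap 0 1 * Equiv.swap 1 2 : Equiv.Perm (Fin 3)) 0 = 1 from rfl,
    show (Equiv.swap 0 1 * Equiv.swap 1 2 : Equiv.Perm (Fin 3)) 1 = 2 from rfl,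
    show (Equiv.swap 0 1 * Equiv.swap 1 2 : Equiv.Perm (Fin 3)) 2 = 0 from rfl,
    show (Equiv.swap 1 2 * Equiv.swap 0 1 : Equiv.Perm (Fin 3)) 0 = 2 from rfl,
    show (Equiv.swap 1 2 * Equiv.swap 0 1 : Equiv.Perm (Fin 3)) 1 = 0 from rfl,
    show (Equiv.swap 1 2 * Equiv.swap 0 1 : Equiv.Perm (Fin 3)) 2 = 1 from rfl]
  have hD : (x 1 - x 0) * (x 2 - x 0) * (x 2 - x 1) ≠ 0 := by apply_rules [mul_ne_zero]
  have e2 : ((x 0 - x 1) * (x 2 - x 1) + (x 0 - x 1) * (x 2 - x 0) + (x 2 - x 1) * (x 2 - x 0)) * (x 0 - x 1 + (x 2 - x 1) + (x 2 - x 0)) / ((x 0 - x 1) * (x 2 - x 1) * (x 2 - x 0)) = (-(((x 0 - x 1) * (x 2 - x 1) + (x 0 - x 1) * (x 2 - x 0) + (x 2 - x 1) * (x 2 - x 0)) * (x 0 - x 1 + (x 2 - x 1) + (x 2 - x 0)))) / ((x 1 - x 0) * (x 2 - x 0) * (x 2 - x 1)) := by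
    rw [div_eq_div_iff (by apply_rules [mul_ne_zero]) hD]; ring
  have e3 : ((x 1 - x 2) * (x 0 - x 2) + (x 1 - x 2) * (x 0 - x 1) + (x 0 - x 2) * (x 0 - x 1)) * (x 1 - x 2 + (x 0 - x 2) + (x 0 - x 1)) / ((x 1 - x 2) * (x 0 - x 2) * (x 0 - x 1)) = (-(((x 1 - x 2) * (x 0 - x 2) + (x 1 - x 2) * (x 0 - x 1) + (x 0 - x 2) * (x 0 - x 1)) * (x 1 - x 2 + (x 0 - x 2) + (x 0 - x 1)))) / ((x 1 - x 0) * (x 2 - x 0) * (x 2 - x 1)) := by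
    rw [div_eq_div_iff (by apply_rules [mul_ne_zero]) hD]; ring
  have e4 : ((x 2 - x 0) * (x 1 - x 0) + (x 2 - x 0) * (x 1 - x 2) + (x 1 - x 0) * (x 1 - x 2)) * (x 2 - x 0 + (x 1 - x 0) + (x 1 - x 2)) / ((x 2 - x 0) * (x 1 - x 0) * (x 1 - x 2)) = (-(((x 2 - x 0) * (x 1 - x 0) + (x 2 - x 0) * (x 1 - x 2) + (x 1 - x 0) * (x 1 - x 2)) * (x 2 - x 0 + (x 1 - x 0) + (x 1 - x 2)))) / ((x 1 - x 0) * (x 2 - x 0) * (x 2 - x 1)) := by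
    rw [div_eq_div_iff (by apply_rules [mul_ne_zero]) hD]; ring
  have e5 : ((x 2 - x 1) * (x 0 - x 1) + (x 2 - x 1) * (x 0 - x 2) + (x 0 - x 1) * (x 0 - x 2)) * (x 2 - x 1 + (x 0 - x 1) + (x 0 - x 2)) / ((x 2 - x 1) * (x 0 - x 1) * (x 0 - x 2)) = (((x 2 - x 1) * (x 0 - x 1) + (x 2 - x 1) * (x 0 - x 2) + (x 0 - x 1) * (x 0 - x 2)) * (x 2 - x 1 + (x 0 - x 1) + (x 0 - x 2))) / ((x 1 - x 0) * (x 2 - x 0) * (x 2 - x 1)) := by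
    rw [div_eq_div_iff (by apply_rules [mul_ne_zero]) hD]; ring
  have e6 : ((x 0 - x 2) * (x 1 - x 2) + (x 0 - x 2) * (x 1 - x 0) + (x 1 - x 2) * (x 1 - x 0)) * (x 0 - x 2 + (x 1 - x 2) + (x 1 - x 0)) / ((x 0 - x 2) * (x 1 - x 2) * (x 1 - x 0)) = (((x 0 - x 2) * (x 1 - x 2) + (x 0 - x 2) * (x 1 - x 0) + (x 1 - x 2) * (x 1 - x 0)) * (x 0 - x 2 + (x 1 - x 2) + (x 1 - x 0))) / ((x 1 - x 0) * (x 2 - x 0) * (x 2 - x 1)) := by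
    rw [div_eq_div_iff (by apply_rules [mul_ne_zero]) hD]; ring
  rw [e2, e3, e4, e5, e6]
  simp only [← add_div]
  rw [div_eq_iff hD]
  ring
end
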